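/- arXiv:2206.13057 — 5 statements merged into one kernel-verified Lean document; each statement's English description precedes it below -/
import Mathlib

section
/- Let M be a maximal matching and M* a maximum matching of a graph G, and suppose |M| < (1/2 + δ)|M*| for some δ ≥ 0. Then the number of augmenting paths for M of length exactly 3 in the symmetric difference M ⊕ M* is at least |M| − 4δ|M*|. -/
variable {V : Type*}

def IsMatching (G : SimpleGraph V) (M : Set (Sym2 V)) : Prop :=
  M ⊆ G.edgeSet ∧ ∀ e ∈ M, ∀ f ∈ M, e ≠ f → ∀ v : V, v ∈ e → v ∉ f

def IsMaximalMatching (G : SimpleGraph V) (M : Set (Sym2 V)) : Prop :=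
  IsMatching G M ∧ ∀ e ∈ G.edgeSet, IsMatching G (insert e M) → e ∈ M

def IsMaximumMatching (G : SimpleGraph V) (M : Set (Sym2 V)) : Prop :=
  IsMatching G M ∧ ∀ N : Set (Sym2 V), IsMatching G N → N.ncard ≤ M.ncard

def UnmatchedBy (M : Set (Sym2 V)) (v : V) : Prop := ∀ e ∈ M, v ∉ e

/-- `(x, u, v, y)` is a length-3 augmenting path for `M` inside `M ⊕ Mstar`:
its middle edge is in `M`, its two end edges are in `Mstar \ M`, and its
endpoints are unmatched by `M`. -/
def IsAug3 (M Mstar : Set (Sym2 V)) (x u v y : V) : Prop :=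
  List.Nodup [x, u, v, y] ∧ s(u, v) ∈ M ∧ s(x, u) ∈ Mstar \ M ∧ s(v, y) ∈ Mstar \ M ∧
    UnmatchedBy M x ∧ UnmatchedBy M y

namespace Aug3Proof

def PW (M : Set (Sym2 V)) : Prop := ∀ e ∈ M, ∀ f ∈ M, e ≠ f → ∀ v : V, v ∈ e → v ∉ f
def Cov (M : Set (Sym2 V)) (v : V) : Prop := ∃ e ∈ M, v ∈ e
def ND (M : Set (Sym2 V)) : Prop := ∀ e ∈ M, ¬ e.IsDiag
def DS (M S : Set (Sym2 V)) : Set V := {v | Cov S v ∧ Cov M v}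
def EX (M S : Set (Sym2 V)) : Set (Sym2 V) := {e | e ∈ S ∧ ∀ v ∈ e, ¬ Cov M v}
def GD (M S : Set (Sym2 V)) : Set (Sym2 V) :=
  {e | ∃ x u v y : V, e = s(u, v) ∧ IsAug3 M S x u v y}

lemma sym2_exists (e : Sym2 V) : ∃ a b : V, e = s(a, b) :=
  Sym2.ind (fun a b => ⟨a, b, rfl⟩) e

lemma uniq {M : Set (Sym2 V)} (h : PW M) {e f : Sym2 V} {v : V} (he : e ∈ M) (hf : f ∈ M)
    (hve : v ∈ e) (hvf : v ∈ f) : e = f := by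
  by_contra hne
  exact h e he f hf hne v hve hvf

lemma unm_iff {M : Set (Sym2 V)} {x : V} : UnmatchedBy M x ↔ ¬ Cov M x := by
  simp [UnmatchedBy, Cov]

lemma pw_mono {M N : Set (Sym2 V)} (h : N ⊆ M) (hM : PW M) : PW N :=
  fun e he f hf hne v hv => hM e (h he) f (h hf) hne v hv

lemma nd_mono {M N : Set (Sym2 V)} (h : N ⊆ M) (hM : ND M) : ND N := fun e he => hM e (h he)

lemma cov_mono {M N : Set (Sym2 V)} (h : N ⊆ M) {v : V} (hc : Cov N v) : Cov M v := by
  obtain ⟨e, he, hv⟩ := hc; exact ⟨e, h he, hv⟩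

lemma ins_le {α : Type*} [Finite α] {P Q : Set α} {a : α} (ha : a ∈ Q) (hsub : P ⊆ Q)
    (hna : a ∉ P) : P.ncard + 1 ≤ Q.ncard := by
  have h := Set.ncard_le_ncard (Set.insert_subset ha hsub) (Set.toFinite _)
  rwa [Set.ncard_insert_of_notMem hna (Set.toFinite _)] at h

lemma ins2_le {α : Type*} [Finite α] {P Q : Set α} {a b : α} (ha : a ∈ Q) (hb : b ∈ Q)
    (hsub : P ⊆ Q) (hna : a ∉ P) (hnb : b ∉ P) (hab : a ≠ b) : P.ncard + 2 ≤ Q.ncard := by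
  have h1 : insert b P ⊆ Q := Set.insert_subset hb hsub
  have h := Set.ncard_le_ncard (Set.insert_subset ha h1) (Set.toFinite _)
  rw [Set.ncard_insert_of_notMem (by simp [hab, hna]) (Set.toFinite _),
    Set.ncard_insert_of_notMem hnb (Set.toFinite _)] at h
  omega

lemma cov_card_le [Fintype V] (S : Set (Sym2 V)) : ({v | Cov S v}).ncard ≤ 2 * S.ncard := by
  generalize hn : S.ncard = n
  induction n generalizing S with
  | zero =>
    have hS : S = ∅ := by rwa [Set.ncard_eq_zero] at hn
    subst hS
    have h : {v | Cov (∅ : Set (Sym2 V)) v} = ∅ := by ext v; simp [Cov]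
    rw [h]; simp
  | succ n ih =>
    have hne : S.Nonempty := by rw [← Set.ncard_pos]; omega
    obtain ⟨e, he⟩ := hne
    obtain ⟨a, b, hab⟩ := sym2_exists e
    have hsub : {v | Cov S v} ⊆ insert a (insert b {v | Cov (S \ {e}) v}) := by
      rintro v ⟨e', he', hve'⟩
      by_cases h : e' = e
      · subst h; rw [hab] at hve'
        rcases Sym2.mem_iff.1 hve' with h | h
        · exact Or.inl h
        · exact Or.inr (Or.inl h)
      · exact Or.inr (Or.inr ⟨e', ⟨he', h⟩, hve'⟩)
    have hc := Set.ncard_le_ncard hsub (Set.toFinite _)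
    have h1 := Set.ncard_insert_le a (insert b {v | Cov (S \ {e}) v})
    have h2 := Set.ncard_insert_le b {v | Cov (S \ {e}) v}
    have h3 : (S \ {e}).ncard = n := by
      rw [Set.ncard_diff_singleton_of_mem he]; omega
    have h4 := ih (S \ {e}) h3
    omega

lemma le_cov_card [Fintype V] {S : Set (Sym2 V)} (hpw : PW S) (hnd : ND S) :
    2 * S.ncard ≤ ({v | Cov S v}).ncard := by
  generalize hn : S.ncard = n
  induction n generalizing S with
  | zero => omega
  | succ n ih =>
    have hne : S.Nonempty := by rw [← Set.ncard_pos]; omega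
    obtain ⟨e, he⟩ := hne
    obtain ⟨a, b, hab⟩ := sym2_exists e
    have hanb : a ≠ b := by
      have h := hnd e he; rw [hab, Sym2.mk_isDiag_iff] at h; exact h
    have hna : a ∉ {v | Cov (S \ {e}) v} := by
      rintro ⟨e', ⟨he', hne'⟩, hae'⟩
      exact hne' (Set.mem_singleton_iff.2
        (uniq hpw he' he hae' (by rw [hab]; exact Sym2.mem_mk_left a b)))
    have hnb : b ∉ {v | Cov (S \ {e}) v} := by
      rintro ⟨e', ⟨he', hne'⟩, hbe'⟩
      exact hne' (Set.mem_singleton_iff.2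
        (uniq hpw he' he hbe' (by rw [hab]; exact Sym2.mem_mk_right a b)))
    have hsub : {v | Cov (S \ {e}) v} ⊆ {v | Cov S v} :=
      fun v hv => cov_mono Set.diff_subset hv
    have hins := ins2_le (P := {v | Cov (S \ {e}) v}) (Q := {v | Cov S v})
      ⟨e, he, by rw [hab]; exact Sym2.mem_mk_left a b⟩
      ⟨e, he, by rw [hab]; exact Sym2.mem_mk_right a b⟩ hsub hna hnb hanb
    have h3 : (S \ {e}).ncard = n := by
      rw [Set.ncard_diff_singleton_of_mem he]; omega
    have h4 := ih (pw_mono Set.diff_subset hpw) (nd_mono Set.diff_subset hnd) h3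
    omega

lemma gd_sub {M' M S' S : Set (Sym2 V)} (hM : M' ⊆ M) (hS : S' ⊆ S)
    (hends : ∀ e₁ ∈ S', e₁ ∉ M' → e₁ ∉ M)
    (hunm : ∀ z : V, ∀ e₁ : Sym2 V, z ∈ e₁ → e₁ ∈ S' → ¬ Cov M' z → ¬ Cov M z) :
    GD M' S' ⊆ GD M S := by
  rintro e₀ ⟨x, u, v, y, rfl, hnd, hmid, h1, h2, hux, huy⟩
  refine ⟨x, u, v, y, rfl, hnd, hM hmid, ⟨hS h1.1, hends _ h1.1 h1.2⟩,
    ⟨hS h2.1, hends _ h2.1 h2.2⟩, ?_, ?_⟩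
  · exact unm_iff.2 (hunm x s(x, u) (Sym2.mem_mk_left x u) h1.1 (unm_iff.1 hux))
  · exact unm_iff.2 (hunm y s(v, y) (Sym2.mem_mk_right v y) h2.1 (unm_iff.1 huy))

lemma ex_sub {M' M S' S : Set (Sym2 V)} (hS : S' ⊆ S)
    (hunm : ∀ z : V, ∀ e₁ : Sym2 V, z ∈ e₁ → e₁ ∈ S' → ¬ Cov M' z → ¬ Cov M z) :
    EX M' S' ⊆ EX M S := by
  rintro e'' ⟨h1, h2⟩
  exact ⟨hS h1, fun v hv => hunm v e'' hv h1 (h2 v hv)⟩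

lemma key [Fintype V] (n : ℕ) : ∀ M S : Set (Sym2 V), M.ncard + S.ncard ≤ n →
    PW M → PW S → ND M → ND S →
    2 * (S.ncard : ℤ) - (M.ncard : ℤ) - ((DS M S).ncard : ℤ) - 2 * ((EX M S).ncard : ℤ)
      ≤ ((GD M S).ncard : ℤ) := by
  induction n with
  | zero =>
    intro M S hle _ _ _ _
    have hM0 : M.ncard = 0 := by omega
    have hS0 : S.ncard = 0 := by omega
    have hSe : S = ∅ := by rwa [Set.ncard_eq_zero] at hS0
    subst hSe
    have hD : (DS M (∅ : Set (Sym2 V))).ncard = 0 := by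
      have h : DS M (∅ : Set (Sym2 V)) = ∅ := by ext v; simp [DS, Cov]
      rw [h]; simp
    have hE : (EX M (∅ : Set (Sym2 V))).ncard = 0 := by
      have h : EX M (∅ : Set (Sym2 V)) = ∅ := by ext e; simp [EX]
      rw [h]; simp
    omega
  | succ n ih =>
    intro M S hle hpwM hpwS hndM hndS
    by_cases h0 : (M ∩ S).Nonempty
    · -- Case 0: remove a common edge from both
      obtain ⟨e, heM, heS⟩ := h0
      obtain ⟨a, b, hab⟩ := sym2_exists e
      have hunm : ∀ z : V, ∀ e₁ : Sym2 V, z ∈ e₁ → e₁ ∈ S \ {e} → ¬ Cov (M \ {e}) z →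
          ¬ Cov M z := by
        rintro z e₁ hz ⟨he₁S, hne₁⟩ hnc ⟨g, hgM, hzg⟩
        by_cases hg : g = e
        · subst hg
          exact hne₁ (Set.mem_singleton_iff.2 (uniq hpwS he₁S heS hz hzg))
        · exact hnc ⟨g, ⟨hgM, hg⟩, hzg⟩
      have hGsub : GD (M \ {e}) (S \ {e}) ⊆ GD M S :=
        gd_sub Set.diff_subset Set.diff_subset
          (fun e₁ he₁ hne₁ hmem => hne₁ ⟨hmem, he₁.2⟩) hunm
      have hExs : EX (M \ {e}) (S \ {e}) ⊆ EX M S := ex_sub Set.diff_subset hunm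
      have ha_in : a ∈ DS M S :=
        ⟨⟨e, heS, by rw [hab]; exact Sym2.mem_mk_left a b⟩,
         ⟨e, heM, by rw [hab]; exact Sym2.mem_mk_left a b⟩⟩
      have ha_not : a ∉ DS (M \ {e}) (S \ {e}) := by
        rintro ⟨⟨e', ⟨he'S, hne'⟩, hae'⟩, -⟩
        exact hne' (Set.mem_singleton_iff.2
          (uniq hpwS he'S heS hae' (by rw [hab]; exact Sym2.mem_mk_left a b)))
      have hDsub : DS (M \ {e}) (S \ {e}) ⊆ DS M S :=
        fun v hv => ⟨cov_mono Set.diff_subset hv.1, cov_mono Set.diff_subset hv.2⟩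
      have hI := ins_le ha_in hDsub ha_not
      have hkk := Set.ncard_le_ncard hGsub (Set.toFinite _)
      have hEx := Set.ncard_le_ncard hExs (Set.toFinite _)
      have hm1 : (M \ {e}).ncard = M.ncard - 1 := Set.ncard_diff_singleton_of_mem heM
      have hs1 : (S \ {e}).ncard = S.ncard - 1 := Set.ncard_diff_singleton_of_mem heS
      have hm2 : 0 < M.ncard := (Set.ncard_pos (Set.toFinite _)).mpr ⟨e, heM⟩
      have hs2 : 0 < S.ncard := (Set.ncard_pos (Set.toFinite _)).mpr ⟨e, heS⟩
      have hih := ih (M \ {e}) (S \ {e}) (by omega) (pw_mono Set.diff_subset hpwM)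
        (pw_mono Set.diff_subset hpwS) (nd_mono Set.diff_subset hndM)
        (nd_mono Set.diff_subset hndS)
      omega
    · by_cases h1 : ∃ e ∈ S, ∀ v ∈ e, ¬ Cov M v
      · -- Case 1: remove an exposed S-edge
        obtain ⟨e, heS, hexp⟩ := h1
        have hunm : ∀ z : V, ∀ e₁ : Sym2 V, z ∈ e₁ → e₁ ∈ S \ {e} → ¬ Cov M z → ¬ Cov M z :=
          fun _ _ _ _ h => h
        have hGsub : GD M (S \ {e}) ⊆ GD M S :=
          gd_sub subset_rfl Set.diff_subset (fun _ _ h => h) hunm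
        have hEin : e ∈ EX M S := ⟨heS, hexp⟩
        have hEnot : e ∉ EX M (S \ {e}) := fun h => h.1.2 rfl
        have hExsub : EX M (S \ {e}) ⊆ EX M S := ex_sub Set.diff_subset hunm
        have hU := ins_le hEin hExsub hEnot
        have hDsub : DS M (S \ {e}) ⊆ DS M S :=
          fun v hv => ⟨cov_mono Set.diff_subset hv.1, hv.2⟩
        have hI := Set.ncard_le_ncard hDsub (Set.toFinite _)
        have hkk := Set.ncard_le_ncard hGsub (Set.toFinite _)
        have hs1 : (S \ {e}).ncard = S.ncard - 1 := Set.ncard_diff_singleton_of_mem heS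
        have hs2 : 0 < S.ncard := (Set.ncard_pos (Set.toFinite _)).mpr ⟨e, heS⟩
        have hih := ih M (S \ {e}) (by omega) hpwM (pw_mono Set.diff_subset hpwS) hndM
          (nd_mono Set.diff_subset hndS)
        omega
      · have hdisj : ∀ g, g ∈ M → g ∈ S → False := fun g hg hg' => h0 ⟨g, hg, hg'⟩
        by_cases h2 : ∃ f ∈ M, ∃ w, w ∈ f ∧ ¬ Cov S w
        · -- Case 2: an M-edge with an endpoint not covered by S
          obtain ⟨f, hfM, v, hvf, hvnc⟩ := h2
          obtain ⟨u, hfe⟩ := Sym2.mem_iff_exists.1 hvf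
          have hvu : v ≠ u := by
            have h := hndM f hfM; rw [hfe, Sym2.mk_isDiag_iff] at h; exact h
          have huf : u ∈ f := by rw [hfe]; exact Sym2.mem_mk_right v u
          by_cases hu : Cov S u
          · -- Case 2C
            obtain ⟨e, heS, hue⟩ := hu
            have hunm : ∀ z : V, ∀ e₁ : Sym2 V, z ∈ e₁ → e₁ ∈ S \ {e} →
                ¬ Cov (M \ {f}) z → ¬ Cov M z := by
              rintro z e₁ hz ⟨he₁S, hne₁⟩ hnc ⟨g, hgM, hzg⟩
              by_cases hg : g = f
              · subst hg
                rw [hfe] at hzg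
                rcases Sym2.mem_iff.1 hzg with rfl | rfl
                · exact hvnc ⟨e₁, he₁S, hz⟩
                · exact hne₁ (Set.mem_singleton_iff.2 (uniq hpwS he₁S heS hz hue))
              · exact hnc ⟨g, ⟨hgM, hg⟩, hzg⟩
            have hGsub : GD (M \ {f}) (S \ {e}) ⊆ GD M S :=
              gd_sub Set.diff_subset Set.diff_subset
                (fun e₁ he₁ _ hm => absurd (hdisj e₁ hm he₁.1) not_false) hunm
            have hExsub : EX (M \ {f}) (S \ {e}) ⊆ EX M S := ex_sub Set.diff_subset hunm
            have hu_in : u ∈ DS M S := ⟨⟨e, heS, hue⟩, ⟨f, hfM, huf⟩⟩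
            have hu_not : u ∉ DS (M \ {f}) (S \ {e}) := by
              rintro ⟨⟨e', ⟨he'S, hne'⟩, hue'⟩, -⟩
              exact hne' (Set.mem_singleton_iff.2 (uniq hpwS he'S heS hue' hue))
            have hDsub : DS (M \ {f}) (S \ {e}) ⊆ DS M S :=
              fun w hw => ⟨cov_mono Set.diff_subset hw.1, cov_mono Set.diff_subset hw.2⟩
            have hI := ins_le hu_in hDsub hu_not
            have hkk := Set.ncard_le_ncard hGsub (Set.toFinite _)
            have hEx := Set.ncard_le_ncard hExsub (Set.toFinite _)
            have hm1 : (M \ {f}).ncard = M.ncard - 1 := Set.ncard_diff_singleton_of_mem hfM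
            have hs1 : (S \ {e}).ncard = S.ncard - 1 := Set.ncard_diff_singleton_of_mem heS
            have hm2 : 0 < M.ncard := (Set.ncard_pos (Set.toFinite _)).mpr ⟨f, hfM⟩
            have hs2 : 0 < S.ncard := (Set.ncard_pos (Set.toFinite _)).mpr ⟨e, heS⟩
            have hih := ih (M \ {f}) (S \ {e}) (by omega) (pw_mono Set.diff_subset hpwM)
              (pw_mono Set.diff_subset hpwS) (nd_mono Set.diff_subset hndM)
              (nd_mono Set.diff_subset hndS)
            omega
          · -- Case 2B
            have hunm : ∀ z : V, ∀ e₁ : Sym2 V, z ∈ e₁ → e₁ ∈ S →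
                ¬ Cov (M \ {f}) z → ¬ Cov M z := by
              rintro z e₁ hz he₁S hnc ⟨g, hgM, hzg⟩
              by_cases hg : g = f
              · subst hg
                rw [hfe] at hzg
                rcases Sym2.mem_iff.1 hzg with rfl | rfl
                · exact hvnc ⟨e₁, he₁S, hz⟩
                · exact hu ⟨e₁, he₁S, hz⟩
              · exact hnc ⟨g, ⟨hgM, hg⟩, hzg⟩
            have hGsub : GD (M \ {f}) S ⊆ GD M S :=
              gd_sub Set.diff_subset subset_rfl
                (fun e₁ he₁ _ hm => absurd (hdisj e₁ hm he₁) not_false) hunm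
            have hExsub : EX (M \ {f}) S ⊆ EX M S := ex_sub subset_rfl hunm
            have hDsub : DS (M \ {f}) S ⊆ DS M S :=
              fun w hw => ⟨hw.1, cov_mono Set.diff_subset hw.2⟩
            have hI := Set.ncard_le_ncard hDsub (Set.toFinite _)
            have hkk := Set.ncard_le_ncard hGsub (Set.toFinite _)
            have hEx := Set.ncard_le_ncard hExsub (Set.toFinite _)
            have hm1 : (M \ {f}).ncard = M.ncard - 1 := Set.ncard_diff_singleton_of_mem hfM
            have hm2 : 0 < M.ncard := (Set.ncard_pos (Set.toFinite _)).mpr ⟨f, hfM⟩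
            have hih := ih (M \ {f}) S (by omega) (pw_mono Set.diff_subset hpwM) hpwS
              (nd_mono Set.diff_subset hndM) hndS
            omega
        · by_cases h3 : ∃ e ∈ S, ∃ x, x ∈ e ∧ ¬ Cov M x
          · -- Case 3: a tight S-edge
            obtain ⟨e, heS, x, hxe, hxnc⟩ := h3
            obtain ⟨u, he_eq⟩ := Sym2.mem_iff_exists.1 hxe
            have hxu : x ≠ u := by
              have h := hndS e heS; rw [he_eq, Sym2.mk_isDiag_iff] at h; exact h
            have hue : u ∈ e := by rw [he_eq]; exact Sym2.mem_mk_right x u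
            have hcu : Cov M u := by
              by_contra hc
              refine h1 ⟨e, heS, fun z hz => ?_⟩
              rw [he_eq] at hz
              rcases Sym2.mem_iff.1 hz with rfl | rfl
              · exact hxnc
              · exact hc
            obtain ⟨f, hfM, huf⟩ := hcu
            obtain ⟨v, hf_eq⟩ := Sym2.mem_iff_exists.1 huf
            have huv : u ≠ v := by
              have h := hndM f hfM; rw [hf_eq, Sym2.mk_isDiag_iff] at h; exact h
            have hvf : v ∈ f := by rw [hf_eq]; exact Sym2.mem_mk_right u v
            have hvx : v ≠ x := fun h => hxnc ⟨f, hfM, h ▸ hvf⟩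
            have hcv : Cov S v := by
              by_contra hc
              exact h2 ⟨f, hfM, v, hvf, hc⟩
            obtain ⟨e', he'S, hve'⟩ := hcv
            have hee' : e' ≠ e := by
              intro h; subst h
              rw [he_eq] at hve'
              rcases Sym2.mem_iff.1 hve' with h | h
              · exact hvx h
              · exact huv h.symm
            obtain ⟨y, he'_eq⟩ := Sym2.mem_iff_exists.1 hve'
            have hvy : v ≠ y := by
              have h := hndS e' he'S; rw [he'_eq, Sym2.mk_isDiag_iff] at h; exact h
            have hye' : y ∈ e' := by rw [he'_eq]; exact Sym2.mem_mk_right v y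
            have hyu : y ≠ u := fun h => hee' (uniq hpwS he'S heS (h ▸ hye') hue)
            have hyx : y ≠ x := fun h => hee' (uniq hpwS he'S heS (h ▸ hye') hxe)
            have heM : e ∉ M := fun h => hdisj e h heS
            have he'M : e' ∉ M := fun h => hdisj e' h he'S
            by_cases hy : Cov M y
            · -- Case 3b: path continues past y
              obtain ⟨g, hgM, hyg⟩ := hy
              have hgf : g ≠ f := by
                intro h; subst h
                rw [hf_eq] at hyg
                rcases Sym2.mem_iff.1 hyg with h | h
                · exact hyu h
                · exact hvy h.symm
              have hExsub : EX (M \ {f}) (S \ {e}) ⊆ EX M S := by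
                rintro e'' ⟨⟨he''S, hne''⟩, h2'⟩
                refine ⟨he''S, fun z hz => ?_⟩
                rintro ⟨g₁, hg₁M, hzg₁⟩
                by_cases hg₁ : g₁ = f
                · subst hg₁
                  rw [hf_eq] at hzg₁
                  rcases Sym2.mem_iff.1 hzg₁ with rfl | rfl
                  · exact hne'' (Set.mem_singleton_iff.2 (uniq hpwS he''S heS hz hue))
                  · have he''e' : e'' = e' := uniq hpwS he''S he'S hz hve'
                    exact h2' y (he''e' ▸ hye') ⟨g, ⟨hgM, hgf⟩, hyg⟩
                · exact h2' z hz ⟨g₁, ⟨hg₁M, hg₁⟩, hzg₁⟩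
              have hu_in : u ∈ DS M S := ⟨⟨e, heS, hue⟩, ⟨f, hfM, huf⟩⟩
              have hv_in : v ∈ DS M S := ⟨⟨e', he'S, hve'⟩, ⟨f, hfM, hvf⟩⟩
              have hu_not : u ∉ DS (M \ {f}) (S \ {e}) := by
                rintro ⟨⟨e₁, ⟨he₁S, hne₁⟩, hue₁⟩, -⟩
                exact hne₁ (Set.mem_singleton_iff.2 (uniq hpwS he₁S heS hue₁ hue))
              have hv_not : v ∉ DS (M \ {f}) (S \ {e}) := by
                rintro ⟨-, ⟨g₁, ⟨hg₁M, hne₁⟩, hvg₁⟩⟩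
                exact hne₁ (Set.mem_singleton_iff.2 (uniq hpwM hg₁M hfM hvg₁ hvf))
              have hDsub : DS (M \ {f}) (S \ {e}) ⊆ DS M S :=
                fun w hw => ⟨cov_mono Set.diff_subset hw.1, cov_mono Set.diff_subset hw.2⟩
              have hI := ins2_le hu_in hv_in hDsub hu_not hv_not huv
              have hGsub : GD (M \ {f}) (S \ {e}) ⊆ insert g (GD M S) := by
                rintro e₀ ⟨x₁, u₁, v₁, y₁, rfl, hnd₁, hmid, hend1, hend2, hux₁, huy₁⟩
                by_cases hx₁ : Cov M x₁
                · obtain ⟨g₁, hg₁M, hxg₁⟩ := hx₁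
                  have hg₁f : g₁ = f := by
                    by_contra hne
                    exact (unm_iff.1 hux₁) ⟨g₁, ⟨hg₁M, hne⟩, hxg₁⟩
                  subst hg₁f
                  rw [hf_eq] at hxg₁
                  rcases Sym2.mem_iff.1 hxg₁ with h | h
                  · exfalso
                    refine hend1.1.2 (Set.mem_singleton_iff.2
                      (uniq hpwS hend1.1.1 heS ?_ hue))
                    rw [← h]; exact Sym2.mem_mk_left x₁ u₁
                  · have hse : s(x₁, u₁) = e' :=
                      uniq hpwS hend1.1.1 he'S (by rw [← h]; exact Sym2.mem_mk_left x₁ u₁) hve'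
                    rw [he'_eq] at hse
                    have hu₁y : u₁ = y := by
                      rcases Sym2.eq_iff.1 hse with ⟨-, h2⟩ | ⟨h1, -⟩
                      · exact h2
                      · exact absurd (h.symm.trans h1) hvy
                    have hmg : s(u₁, v₁) = g :=
                      uniq hpwM hmid.1 hgM (by rw [hu₁y]; exact Sym2.mem_mk_left y v₁) hyg
                    exact Set.mem_insert_iff.2 (Or.inl hmg)
                · by_cases hy₁ : Cov M y₁
                  · obtain ⟨g₁, hg₁M, hyg₁⟩ := hy₁
                    have hg₁f : g₁ = f := by
                      by_contra hne
                      exact (unm_iff.1 huy₁) ⟨g₁, ⟨hg₁M, hne⟩, hyg₁⟩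
                    subst hg₁f
                    rw [hf_eq] at hyg₁
                    rcases Sym2.mem_iff.1 hyg₁ with h | h
                    · exfalso
                      refine hend2.1.2 (Set.mem_singleton_iff.2
                        (uniq hpwS hend2.1.1 heS ?_ hue))
                      rw [← h]; exact Sym2.mem_mk_right v₁ y₁
                    · have hse : s(v₁, y₁) = e' :=
                        uniq hpwS hend2.1.1 he'S (by rw [← h]; exact Sym2.mem_mk_right v₁ y₁) hve'
                      rw [he'_eq] at hse
                      have hv₁y : v₁ = y := by
                        rcases Sym2.eq_iff.1 hse with ⟨-, h2⟩ | ⟨h1, -⟩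
                        · exact absurd (h.symm.trans h2) hvy
                        · exact h1
                      have hmg : s(u₁, v₁) = g :=
                        uniq hpwM hmid.1 hgM (by rw [hv₁y]; exact Sym2.mem_mk_right u₁ y) hyg
                      exact Set.mem_insert_iff.2 (Or.inl hmg)
                  · refine Set.mem_insert_iff.2 (Or.inr ⟨x₁, u₁, v₁, y₁, rfl, hnd₁, hmid.1,
                      ⟨hend1.1.1, fun hm => hdisj _ hm hend1.1.1⟩,
                      ⟨hend2.1.1, fun hm => hdisj _ hm hend2.1.1⟩,
                      unm_iff.2 hx₁, unm_iff.2 hy₁⟩)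
              have hkk : (GD (M \ {f}) (S \ {e})).ncard ≤ (GD M S).ncard + 1 :=
                le_trans (Set.ncard_le_ncard hGsub (Set.toFinite _)) (Set.ncard_insert_le g _)
              have hEx := Set.ncard_le_ncard hExsub (Set.toFinite _)
              have hm1 : (M \ {f}).ncard = M.ncard - 1 := Set.ncard_diff_singleton_of_mem hfM
              have hs1 : (S \ {e}).ncard = S.ncard - 1 := Set.ncard_diff_singleton_of_mem heS
              have hm2 : 0 < M.ncard := (Set.ncard_pos (Set.toFinite _)).mpr ⟨f, hfM⟩
              have hs2 : 0 < S.ncard := (Set.ncard_pos (Set.toFinite _)).mpr ⟨e, heS⟩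
              have hih := ih (M \ {f}) (S \ {e}) (by omega) (pw_mono Set.diff_subset hpwM)
                (pw_mono Set.diff_subset hpwS) (nd_mono Set.diff_subset hndM)
                (nd_mono Set.diff_subset hndS)
              omega
            · -- Case 3a: an augmenting path of length 3
              have hnodup : List.Nodup [x, u, v, y] := by
                simp [List.nodup_cons, hxu, huv, hvy, Ne.symm hvx, Ne.symm hyx, Ne.symm hyu]
              have hfGD : f ∈ GD M S :=
                ⟨x, u, v, y, hf_eq, hnodup, by rw [← hf_eq]; exact hfM,
                  by rw [← he_eq]; exact ⟨heS, heM⟩, by rw [← he'_eq]; exact ⟨he'S, he'M⟩,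
                  unm_iff.2 hxnc, unm_iff.2 hy⟩
              have he'S1 : e' ∈ S \ {e} := ⟨he'S, fun h => hee' h⟩
              have hunm : ∀ z : V, ∀ e₁ : Sym2 V, z ∈ e₁ → e₁ ∈ (S \ {e}) \ {e'} →
                  ¬ Cov (M \ {f}) z → ¬ Cov M z := by
                rintro z e₁ hz ⟨⟨he₁S, hne₁⟩, hne₁'⟩ hnc ⟨g₁, hg₁M, hzg₁⟩
                by_cases hg : g₁ = f
                · subst hg
                  rw [hf_eq] at hzg₁
                  rcases Sym2.mem_iff.1 hzg₁ with rfl | rfl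
                  · exact hne₁ (Set.mem_singleton_iff.2 (uniq hpwS he₁S heS hz hue))
                  · exact hne₁' (Set.mem_singleton_iff.2 (uniq hpwS he₁S he'S hz hve'))
                · exact hnc ⟨g₁, ⟨hg₁M, hg⟩, hzg₁⟩
              have hS'sub : (S \ {e}) \ {e'} ⊆ S := Set.diff_subset.trans Set.diff_subset
              have hGsub : GD (M \ {f}) ((S \ {e}) \ {e'}) ⊆ GD M S :=
                gd_sub Set.diff_subset hS'sub
                  (fun e₁ he₁ _ hm => absurd (hdisj e₁ hm (hS'sub he₁)) not_false) hunm
              have hfnot : f ∉ GD (M \ {f}) ((S \ {e}) \ {e'}) := by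
                rintro ⟨x₁, u₁, v₁, y₁, he₀, -, hmid, -⟩
                exact hmid.2 (Set.mem_singleton_iff.2 he₀.symm)
              have hkk := ins_le hfGD hGsub hfnot
              have hExsub : EX (M \ {f}) ((S \ {e}) \ {e'}) ⊆ EX M S := ex_sub hS'sub hunm
              have hu_in : u ∈ DS M S := ⟨⟨e, heS, hue⟩, ⟨f, hfM, huf⟩⟩
              have hv_in : v ∈ DS M S := ⟨⟨e', he'S, hve'⟩, ⟨f, hfM, hvf⟩⟩
              have hu_not : u ∉ DS (M \ {f}) ((S \ {e}) \ {e'}) := by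
                rintro ⟨⟨e₁, ⟨⟨he₁S, hne₁⟩, -⟩, hue₁⟩, -⟩
                exact hne₁ (Set.mem_singleton_iff.2 (uniq hpwS he₁S heS hue₁ hue))
              have hv_not : v ∉ DS (M \ {f}) ((S \ {e}) \ {e'}) := by
                rintro ⟨⟨e₁, ⟨⟨he₁S, -⟩, hne₁'⟩, hve₁⟩, -⟩
                exact hne₁' (Set.mem_singleton_iff.2 (uniq hpwS he₁S he'S hve₁ hve'))
              have hDsub : DS (M \ {f}) ((S \ {e}) \ {e'}) ⊆ DS M S :=
                fun w hw => ⟨cov_mono hS'sub hw.1, cov_mono Set.diff_subset hw.2⟩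
              have hI := ins2_le hu_in hv_in hDsub hu_not hv_not huv
              have hEx := Set.ncard_le_ncard hExsub (Set.toFinite _)
              have hm1 : (M \ {f}).ncard = M.ncard - 1 := Set.ncard_diff_singleton_of_mem hfM
              have hs1 : (S \ {e}).ncard = S.ncard - 1 := Set.ncard_diff_singleton_of_mem heS
              have hs1' : ((S \ {e}) \ {e'}).ncard = (S \ {e}).ncard - 1 :=
                Set.ncard_diff_singleton_of_mem he'S1
              have hm2 : 0 < M.ncard := (Set.ncard_pos (Set.toFinite _)).mpr ⟨f, hfM⟩
              have hs2 : 0 < S.ncard := (Set.ncard_pos (Set.toFinite _)).mpr ⟨e, heS⟩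
              have hs3 : 0 < (S \ {e}).ncard := (Set.ncard_pos (Set.toFinite _)).mpr ⟨e', he'S1⟩
              have hih := ih (M \ {f}) ((S \ {e}) \ {e'}) (by omega)
                (pw_mono Set.diff_subset hpwM) (pw_mono hS'sub hpwS)
                (nd_mono Set.diff_subset hndM) (nd_mono hS'sub hndS)
              omega
          · -- Case 4: every endpoint of every S-edge is M-covered
            push_neg at h3
            have hsub : {v | Cov S v} ⊆ DS M S := by
              rintro v ⟨e, he, hv⟩
              exact ⟨⟨e, he, hv⟩, h3 e he v hv⟩
            have h2s := le_cov_card hpwS hndS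
            have hD := Set.ncard_le_ncard hsub (Set.toFinite _)
            omega



lemma goal_key [Fintype V] (G : SimpleGraph V) (M Mstar : Set (Sym2 V))
    (hM : IsMaximalMatching G M) (hMstar : IsMaximumMatching G Mstar) :
    2 * (Mstar.ncard : ℤ) - 3 * (M.ncard : ℤ) ≤ ((GD M Mstar).ncard : ℤ) := by
  have hndM : ND M := fun e he => G.not_isDiag_of_mem_edgeSet (hM.1.1 he)
  have hndS : ND Mstar := fun e he => G.not_isDiag_of_mem_edgeSet (hMstar.1.1 he)
  have hEX : EX M Mstar = ∅ := by
    ext e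
    simp only [EX, Set.mem_setOf_eq, Set.mem_empty_iff_false, iff_false, not_and]
    intro heS hexp
    have heG : e ∈ G.edgeSet := hMstar.1.1 heS
    have hins : IsMatching G (insert e M) := by
      constructor
      · intro g hg
        rcases Set.mem_insert_iff.1 hg with rfl | hgM
        · exact heG
        · exact hM.1.1 hgM
      · intro g hg g' hg' hne w hwg
        rcases Set.mem_insert_iff.1 hg with rfl | hgM
        · rcases Set.mem_insert_iff.1 hg' with rfl | hg'M
          · exact absurd rfl hne
          · exact fun hwg' => hexp w hwg ⟨g', hg'M, hwg'⟩
        · rcases Set.mem_insert_iff.1 hg' with rfl | hg'M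
          · exact fun hwg' => hexp w hwg' ⟨g, hgM, hwg⟩
          · exact hM.1.2 g hgM g' hg'M hne w hwg
    have heMem : e ∈ M := hM.2 e heG hins
    obtain ⟨a, b, hab⟩ := sym2_exists e
    exact hexp a (by rw [hab]; exact Sym2.mem_mk_left a b)
      ⟨e, heMem, by rw [hab]; exact Sym2.mem_mk_left a b⟩
  have hEX0 : (EX M Mstar).ncard = 0 := by rw [hEX]; simp
  have hDle : (DS M Mstar).ncard ≤ 2 * M.ncard :=
    le_trans (Set.ncard_le_ncard (fun v hv => hv.2) (Set.toFinite _)) (cov_card_le M)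
  have hkey := key (M.ncard + Mstar.ncard) M Mstar le_rfl hM.1.2 hMstar.1.2 hndM hndS
  omega

end Aug3Proof

/-- If a maximal matching `M` has size less than `(1/2 + δ)` times the size of a maximum
matching `Mstar`, then `M ⊕ Mstar` contains at least `|M| − 4δ|Mstar|` length-3
augmenting paths for `M` (counted by their middle edges, which determine them). -/
theorem stmt0 [Fintype V] (G : SimpleGraph V) (M Mstar : Set (Sym2 V)) (δ : ℝ)
    (hδ : 0 ≤ δ) (hM : IsMaximalMatching G M) (hMstar : IsMaximumMatching G Mstar)
    (hsmall : (M.ncard : ℝ) < (1/2 + δ) * Mstar.ncard) :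
    (M.ncard : ℝ) - 4 * δ * Mstar.ncard ≤
      (Set.ncard {e : Sym2 V | ∃ x u v y : V, e = s(u, v) ∧ IsAug3 M Mstar x u v y} : ℝ) := by

  have hZ := Aug3Proof.goal_key G M Mstar hM hMstar
  have hset : {e : Sym2 V | ∃ x u v y : V, e = s(u, v) ∧ IsAug3 M Mstar x u v y}
      = Aug3Proof.GD M Mstar := rfl
  rw [hset]
  have hR : 2 * (Mstar.ncard : ℝ) - 3 * (M.ncard : ℝ)
      ≤ ((Aug3Proof.GD M Mstar).ncard : ℝ) := by exact_mod_cast hZ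
  have hexp : (1/2 + δ) * (Mstar.ncard : ℝ)
      = (Mstar.ncard : ℝ) / 2 + δ * Mstar.ncard := by ring
  rw [hexp] at hsmall
  have h4 : 4 * δ * (Mstar.ncard : ℝ) = 4 * (δ * Mstar.ncard) := by ring
  rw [h4]
  linarith
end

section
/- Fix positive reals a ≤ b ≤ N with a/b ≥ 2/N. Consider a sequential process of (a/b)·N rounds where in round i an element is chosen uniformly at random among N − i + 1 remaining elements. Fix an element ℓ and suppose that, throughout all rounds, ℓ has more than b 'live' incident elements among the remaining ones. Then the probability that at most one incident element of ℓ is ever selected during the process is at most (2aN/b)·(1 − b/N)^{aN/(2b)} ≤ 2N/e^{a/2}. -/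
open Classical

open Finset in

lemma stmt8_prefix (R : ℕ) (p : ℝ) (hp0 : 0 ≤ p) (hp1 : p ≤ 1)
    (w : (Fin R → Bool) → ℝ) (hw0 : ∀ g, 0 ≤ w g) (hw1 : ∑ g, w g = 1)
    (hcond : ∀ (i : Fin R) (f : Fin R → Bool),
      p * (∑ g ∈ Finset.univ.filter (fun g : Fin R → Bool =>
          ∀ j, j < i → g j = f j), w g) ≤
        ∑ g ∈ Finset.univ.filter (fun g : Fin R → Bool =>
          (∀ j, j < i → g j = f j) ∧ g i = true), w g) :
    ∀ k, k ≤ R → ∀ f : Fin R → Bool,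
      (∑ g ∈ Finset.univ.filter (fun g : Fin R → Bool =>
          ∀ j : Fin R, (j : ℕ) < k → g j = f j), w g) ≤
        (1 - p) ^ ((Finset.univ.filter (fun j : Fin R => (j : ℕ) < k ∧ f j = false)).card) := by
  intro k
  induction k with
  | zero =>
    intro _ f
    simp [hw1]
  | succ k ih =>
    intro hk f
    have hkR : k < R := hk
    set i : Fin R := ⟨k, hkR⟩ with hi
    have hlt : ∀ j : Fin R, (j < i) = ((j : ℕ) < k) := by
      intro j; simp [Fin.lt_def, hi]
    -- split the (k+1)-filter
    have hsplit : (Finset.univ.filter (fun g : Fin R → Bool =>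
        ∀ j : Fin R, (j : ℕ) < k + 1 → g j = f j)) =
        (Finset.univ.filter (fun g : Fin R → Bool =>
          (∀ j : Fin R, (j : ℕ) < k → g j = f j) ∧ g i = f i)) := by
      ext g
      simp only [mem_filter, mem_univ, true_and]
      constructor
      · intro h
        exact ⟨fun j hj => h j (Nat.lt_succ_of_lt hj), h i (by simp [hi])⟩
      · rintro ⟨h1, h2⟩ j hj
        rcases Nat.lt_succ_iff_lt_or_eq.mp hj with hj' | hj'
        · exact h1 j hj'
        · have : j = i := Fin.ext (by simp [hi, hj'])
          rw [this]; exact h2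
    have hA : p * (∑ g ∈ Finset.univ.filter (fun g : Fin R → Bool =>
          ∀ j : Fin R, (j : ℕ) < k → g j = f j), w g) ≤
        ∑ g ∈ Finset.univ.filter (fun g : Fin R → Bool =>
          (∀ j : Fin R, (j : ℕ) < k → g j = f j) ∧ g i = true), w g := by
      have := hcond i f
      simpa [hlt] using this
    have hSnonneg : (0:ℝ) ≤ ∑ g ∈ Finset.univ.filter (fun g : Fin R → Bool =>
          ∀ j : Fin R, (j : ℕ) < k → g j = f j), w g :=
      Finset.sum_nonneg fun g _ => hw0 g
    have hih := ih (le_of_lt hkR) f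
    rw [hsplit]
    cases hfi : f i with
    | true =>
      -- subset bound
      have hsub : ∑ g ∈ Finset.univ.filter (fun g : Fin R → Bool =>
            (∀ j : Fin R, (j : ℕ) < k → g j = f j) ∧ g i = true), w g ≤
          ∑ g ∈ Finset.univ.filter (fun g : Fin R → Bool =>
            ∀ j : Fin R, (j : ℕ) < k → g j = f j), w g := by
        apply Finset.sum_le_sum_of_subset_of_nonneg
        · intro g hg
          simp only [mem_filter, mem_univ, true_and] at hg ⊢
          exact hg.1
        · intro g _ _; exact hw0 g
      have hcard : (Finset.univ.filter (fun j : Fin R => (j : ℕ) < k + 1 ∧ f j = false)).card =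
          (Finset.univ.filter (fun j : Fin R => (j : ℕ) < k ∧ f j = false)).card := by
        congr 1
        ext j
        simp only [mem_filter, mem_univ, true_and]
        constructor
        · rintro ⟨hj, hjf⟩
          rcases Nat.lt_succ_iff_lt_or_eq.mp hj with hj' | hj'
          · exact ⟨hj', hjf⟩
          · exfalso
            have hji : j = i := Fin.ext (by simp [hi, hj'])
            rw [hji, hfi] at hjf
            exact absurd hjf (by simp)
        · rintro ⟨hj, hjf⟩; exact ⟨Nat.lt_succ_of_lt hj, hjf⟩
      rw [hcard]
      exact le_trans hsub hih
    | false =>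
      -- complement bound
      have hpart := Finset.sum_filter_add_sum_filter_not
        (Finset.univ.filter (fun g : Fin R → Bool =>
          ∀ j : Fin R, (j : ℕ) < k → g j = f j)) (fun g => g i = true) w
      have hfalse : (Finset.univ.filter (fun g : Fin R → Bool =>
            ∀ j : Fin R, (j : ℕ) < k → g j = f j)).filter (fun g => ¬ g i = true) =
          Finset.univ.filter (fun g : Fin R → Bool =>
            (∀ j : Fin R, (j : ℕ) < k → g j = f j) ∧ g i = false) := by
        ext g; simp only [mem_filter, mem_univ, true_and, Bool.not_eq_true]
      have htrue : (Finset.univ.filter (fun g : Fin R → Bool =>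
            ∀ j : Fin R, (j : ℕ) < k → g j = f j)).filter (fun g => g i = true) =
          Finset.univ.filter (fun g : Fin R → Bool =>
            (∀ j : Fin R, (j : ℕ) < k → g j = f j) ∧ g i = true) := by
        ext g; simp only [mem_filter, mem_univ, true_and]
      rw [hfalse, htrue] at hpart
      have hle : ∑ g ∈ Finset.univ.filter (fun g : Fin R → Bool =>
            (∀ j : Fin R, (j : ℕ) < k → g j = f j) ∧ g i = false), w g ≤
          (1 - p) * ∑ g ∈ Finset.univ.filter (fun g : Fin R → Bool =>
            ∀ j : Fin R, (j : ℕ) < k → g j = f j), w g := by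
        nlinarith [hA, hpart]
      have hcard : (Finset.univ.filter (fun j : Fin R => (j : ℕ) < k + 1 ∧ f j = false)) =
          insert i (Finset.univ.filter (fun j : Fin R => (j : ℕ) < k ∧ f j = false)) := by
        ext j
        simp only [mem_filter, mem_univ, true_and, mem_insert]
        constructor
        · rintro ⟨hj, hjf⟩
          rcases Nat.lt_succ_iff_lt_or_eq.mp hj with hj' | hj'
          · exact Or.inr ⟨hj', hjf⟩
          · exact Or.inl (Fin.ext (by simp [hi, hj']))
        · rintro (rfl | ⟨hj, hjf⟩)
          · exact ⟨Nat.lt_succ_self _, hfi⟩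
          · exact ⟨Nat.lt_succ_of_lt hj, hjf⟩
      have hnotmem : i ∉ Finset.univ.filter (fun j : Fin R => (j : ℕ) < k ∧ f j = false) := by
        simp [hi]
      rw [hcard, Finset.card_insert_of_notMem hnotmem, pow_succ]
      calc ∑ g ∈ Finset.univ.filter (fun g : Fin R → Bool =>
            (∀ j : Fin R, (j : ℕ) < k → g j = f j) ∧ g i = false), w g
          ≤ (1 - p) * ∑ g ∈ Finset.univ.filter (fun g : Fin R → Bool =>
            ∀ j : Fin R, (j : ℕ) < k → g j = f j), w g := hle
        _ ≤ (1 - p) * (1 - p) ^ ((Finset.univ.filter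
              (fun j : Fin R => (j : ℕ) < k ∧ f j = false)).card) := by
            apply mul_le_mul_of_nonneg_left hih (by linarith)
        _ = (1 - p) ^ ((Finset.univ.filter
              (fun j : Fin R => (j : ℕ) < k ∧ f j = false)).card) * (1 - p) := by ring


open Finset in
/-- Fix `0 < a ≤ b ≤ N` with `a/b ≥ 2/N`, and consider a sequential process of
`R = aN/b` rounds in which, conditioned on any history, round `i` selects an incident
element of a fixed element `ℓ` with probability at least `b/N` (this holds when `ℓ`
always keeps more than `b` live incident elements among the remaining ones).  Then the
probability that at most one incident element of `ℓ` is ever selected is at most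
`(2aN/b)·(1 − b/N)^{aN/(2b)} ≤ 2N/e^{a/2}`. -/
theorem stmt8 (a b N : ℝ) (R : ℕ) (ha : 0 < a) (hab : a ≤ b) (hbN : b ≤ N)
    (h2 : 2 / N ≤ a / b) (hR : (R : ℝ) = a * N / b)
    (w : (Fin R → Bool) → ℝ) (hw0 : ∀ g, 0 ≤ w g) (hw1 : ∑ g, w g = 1)
    (hcond : ∀ (i : Fin R) (f : Fin R → Bool),
      (b / N) * (∑ g ∈ Finset.univ.filter (fun g : Fin R → Bool =>
          ∀ j, j < i → g j = f j), w g) ≤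
        ∑ g ∈ Finset.univ.filter (fun g : Fin R → Bool =>
          (∀ j, j < i → g j = f j) ∧ g i = true), w g) :
    (∑ g ∈ Finset.univ.filter (fun g : Fin R → Bool =>
        (Finset.univ.filter (fun i => g i = true)).card ≤ 1), w g) ≤
      (2 * a * N / b) * (1 - b / N) ^ ((a * N) / (2 * b)) ∧
    (2 * a * N / b) * (1 - b / N) ^ ((a * N) / (2 * b)) ≤ 2 * N / Real.exp (a / 2) := by
  have hb : 0 < b := lt_of_lt_of_le ha hab
  have hN : 0 < N := lt_of_lt_of_le hb hbN
  set p : ℝ := b / N with hp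
  have hp0 : 0 < p := div_pos hb hN
  have hp1 : p ≤ 1 := (div_le_one hN).2 hbN
  have hRge2 : 2 ≤ R := by
    have : (2:ℝ) ≤ (R:ℝ) := by
      rw [hR]
      have := (div_le_div_iff₀ hN hb).1 (le_trans h2 (le_of_eq rfl))
      calc (2:ℝ) = 2 / N * N := by field_simp
        _ ≤ a / b * N := by
            apply mul_le_mul_of_nonneg_right h2 (le_of_lt hN)
        _ = a * N / b := by ring
    exact_mod_cast this
  -- pointwise bound on each w f
  have hpoint : ∀ f : Fin R → Bool,
      w f ≤ (1 - p) ^ ((Finset.univ.filter (fun j : Fin R => f j = false)).card) := by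
    intro f
    have h := stmt8_prefix R p (le_of_lt hp0) hp1 w hw0 hw1 hcond R le_rfl f
    have h1 : (Finset.univ.filter (fun g : Fin R → Bool =>
        ∀ j : Fin R, (j : ℕ) < R → g j = f j)) = {f} := by
      ext g
      simp only [mem_filter, mem_univ, true_and, mem_singleton]
      constructor
      · intro hg; funext j; exact hg j j.isLt
      · rintro rfl; intro j _; rfl
    have h2' : (Finset.univ.filter (fun j : Fin R => (j : ℕ) < R ∧ f j = false)) =
        (Finset.univ.filter (fun j : Fin R => f j = false)) := by
      ext j; simp [j.isLt]
    rw [h1, h2', Finset.sum_singleton] at h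
    exact h
  -- each g with ≤1 trues has ≥ R-1 falses, hence w g ≤ (1-p)^(R-1)
  have hbound : ∀ g : Fin R → Bool,
      (Finset.univ.filter (fun i => g i = true)).card ≤ 1 →
      w g ≤ (1 - p) ^ (R - 1) := by
    intro g hg
    refine le_trans (hpoint g) ?_
    apply pow_le_pow_of_le_one (by linarith) (by linarith)
    have hpartition : (Finset.univ.filter (fun i : Fin R => g i = true)).card +
        (Finset.univ.filter (fun i : Fin R => g i = false)).card = R := by
      have := Finset.card_filter_add_card_filter_not
        (s := (Finset.univ : Finset (Fin R))) (p := fun i => g i = true)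
      simpa [Bool.not_eq_true, Finset.card_univ] using this
    omega
  -- the set of g with ≤1 trues has card ≤ R+1
  have hcard : (Finset.univ.filter (fun g : Fin R → Bool =>
      (Finset.univ.filter (fun i => g i = true)).card ≤ 1)).card ≤ R + 1 := by
    have hsub : Finset.univ.filter (fun g : Fin R → Bool =>
        (Finset.univ.filter (fun i => g i = true)).card ≤ 1) ⊆
        insert (fun _ => false)
          ((Finset.univ : Finset (Fin R)).image (fun i => fun j => decide (j = i))) := by
      intro g hg
      simp only [mem_filter, mem_univ, true_and] at hg
      rcases Nat.le_one_iff_eq_zero_or_eq_one.mp hg with h0 | h1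
      · have he : (Finset.univ.filter (fun i : Fin R => g i = true)) = ∅ :=
          Finset.card_eq_zero.mp h0
        have : g = fun _ => false := by
          funext j
          by_contra hj
          have : g j = true := by
            cases hgj : g j
            · exact absurd hgj hj
            · rfl
          have : j ∈ Finset.univ.filter (fun i : Fin R => g i = true) := by
            simp [this]
          rw [he] at this
          exact absurd this (Finset.notMem_empty j)
        rw [this]
        exact Finset.mem_insert_self _ _
      · obtain ⟨i, hi⟩ := Finset.card_eq_one.mp h1
        apply Finset.mem_insert_of_mem
        apply Finset.mem_image.mpr
        refine ⟨i, Finset.mem_univ i, ?_⟩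
        funext j
        have hj : g j = true ↔ j = i := by
          constructor
          · intro h
            have hm : j ∈ Finset.univ.filter (fun i : Fin R => g i = true) := by simp [h]
            rw [hi] at hm
            simpa using hm
          · intro h
            subst h
            have hm : j ∈ Finset.univ.filter (fun i : Fin R => g i = true) := by
              rw [hi]; simp
            simpa using hm
        cases hgj : g j
        · have : ¬ j = i := fun h => by simp [hj.2 h] at hgj
          simp [this]
        · simp [hj.1 hgj]
    calc (Finset.univ.filter (fun g : Fin R → Bool =>
          (Finset.univ.filter (fun i => g i = true)).card ≤ 1)).card
        ≤ (insert (fun _ => false)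
            ((Finset.univ : Finset (Fin R)).image (fun i => fun j => decide (j = i)))).card :=
          Finset.card_le_card hsub
      _ ≤ ((Finset.univ : Finset (Fin R)).image (fun i => fun j => decide (j = i))).card + 1 :=
          Finset.card_insert_le _ _
      _ ≤ R + 1 := by
          have := Finset.card_image_le (s := (Finset.univ : Finset (Fin R)))
            (f := fun i => fun j => decide (j = i))
          simpa [Finset.card_univ] using this
  -- sum bound
  have hsum : (∑ g ∈ Finset.univ.filter (fun g : Fin R → Bool =>
      (Finset.univ.filter (fun i => g i = true)).card ≤ 1), w g) ≤
      ((R:ℝ) + 1) * (1 - p) ^ (R - 1) := by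
    calc (∑ g ∈ Finset.univ.filter (fun g : Fin R → Bool =>
          (Finset.univ.filter (fun i => g i = true)).card ≤ 1), w g)
        ≤ (Finset.univ.filter (fun g : Fin R → Bool =>
            (Finset.univ.filter (fun i => g i = true)).card ≤ 1)).card • ((1 - p) ^ (R - 1)) := by
          apply Finset.sum_le_card_nsmul
          intro g hg
          simp only [mem_filter, mem_univ, true_and] at hg
          exact hbound g hg
      _ = ((Finset.univ.filter (fun g : Fin R → Bool =>
            (Finset.univ.filter (fun i => g i = true)).card ≤ 1)).card : ℝ) * (1 - p) ^ (R - 1) := by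
          rw [nsmul_eq_mul]
      _ ≤ ((R:ℝ) + 1) * (1 - p) ^ (R - 1) := by
          apply mul_le_mul_of_nonneg_right
          · exact_mod_cast hcard
          · exact pow_nonneg (by linarith) _
  -- rewrite RHS in terms of R
  have hbne : b ≠ 0 := ne_of_gt hb
  have h2aN : 2 * a * N / b = 2 * (R:ℝ) := by rw [hR]; ring
  have hexp : a * N / (2 * b) = (R:ℝ) / 2 := by rw [hR]; ring
  have hnatpow_le : (1 - p) ^ (R - 1) ≤ (1 - p) ^ ((R:ℝ) / 2) := by
    rcases eq_or_lt_of_le hp1 with hpe | hpl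
    · -- p = 1, base = 0
      have hbase : (1:ℝ) - p = 0 := by rw [← hpe]; ring
      rw [hbase]
      have : (0:ℝ) ^ (R - 1) = 0 := by
        exact zero_pow (Nat.sub_ne_zero_of_lt (lt_of_lt_of_le one_lt_two hRge2))
      rw [this]
      exact Real.rpow_nonneg le_rfl _
    · have hbase0 : (0:ℝ) < 1 - p := by linarith
      have hbase1 : (1:ℝ) - p ≤ 1 := by linarith
      rw [← Real.rpow_natCast (1 - p) (R - 1)]
      apply Real.rpow_le_rpow_of_exponent_ge hbase0 hbase1
      have : ((R - 1 : ℕ) : ℝ) = (R:ℝ) - 1 := by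
        have h1R : 1 ≤ R := le_trans one_le_two hRge2
        push_cast [Nat.cast_sub h1R]
        ring
      rw [this]
      have : (2:ℝ) ≤ (R:ℝ) := by exact_mod_cast hRge2
      linarith
  constructor
  · rw [h2aN, hexp]
    calc (∑ g ∈ Finset.univ.filter (fun g : Fin R → Bool =>
          (Finset.univ.filter (fun i => g i = true)).card ≤ 1), w g)
        ≤ ((R:ℝ) + 1) * (1 - p) ^ (R - 1) := hsum
      _ ≤ (2 * (R:ℝ)) * (1 - p) ^ ((R:ℝ) / 2) := by
          apply mul_le_mul
          · have : (2:ℝ) ≤ (R:ℝ) := by exact_mod_cast hRge2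
            linarith
          · exact hnatpow_le
          · exact pow_nonneg (by linarith) _
          · positivity
  · rw [h2aN, hexp]
    have hfac : (1 - p) ^ ((R:ℝ)/2) ≤ Real.exp (-(a/2)) := by
      have h1 : (1:ℝ) - p ≤ Real.exp (-p) := by
        have := Real.add_one_le_exp (-p)
        linarith
      have h2' : (1 - p) ^ ((R:ℝ)/2) ≤ (Real.exp (-p)) ^ ((R:ℝ)/2) :=
        Real.rpow_le_rpow (by linarith) h1 (by positivity)
      refine le_trans h2' ?_
      rw [← Real.exp_mul]
      apply le_of_eq
      congr 1
      rw [hR, hp]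
      field_simp
    have hRN : 2 * (R:ℝ) ≤ 2 * N := by
      rw [hR]
      have : a * N / b ≤ N := by
        rw [div_le_iff₀ hb]
        nlinarith
      linarith
    calc (2 * (R:ℝ)) * (1 - p) ^ ((R:ℝ)/2)
        ≤ (2 * N) * Real.exp (-(a/2)) := by
          apply mul_le_mul hRN hfac (Real.rpow_nonneg (by linarith) _) (by linarith)
      _ = 2 * N / Real.exp (a/2) := by
          rw [Real.exp_neg]
          field_simp
end

section
/- Let N, x, k be positive integers and θ ∈ (0,1) with k < N/2. Suppose every element of an N-element structure has at most x 'incident' elements. When a uniformly random ordered θN-prefix is selected, the probability that it contains an increasing chain of k+1 elements ℓ_{i_1}, …, ℓ_{i_{k+1}} in which consecutive elements are incident is at most C(θN, k+1)·(x/(N − k))^k ≤ N·(2exθ/(k+1))^{k+1}. -/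
set_option maxHeartbeats 1000000

open Finset Equiv

namespace Stmt9Aux

variable {N x : ℕ} {r : Fin N → Fin N → Prop}

open scoped Classical in
lemma chain_count (hdeg : ∀ u : Fin N, Set.ncard {v | r u v} ≤ x) :
    ∀ n : ℕ, ((univ : Finset (Fin (n + 1) → Fin N)).filter
      (fun g => ∀ j : Fin n, r (g j.castSucc) (g j.succ))).card ≤ N * x ^ n := by
  have hnb : ∀ u : Fin N, (univ.filter (fun v => r u v)).card ≤ x := by
    intro u
    have h1 : ({v | r u v} : Set (Fin N)) = ↑(univ.filter fun v => r u v) := by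
      ext v; simp
    have := hdeg u
    rwa [h1, Set.ncard_coe_finset] at this
  intro n
  induction n with
  | zero =>
      calc _ ≤ (univ : Finset (Fin 1 → Fin N)).card := card_filter_le _ _
        _ = N * x ^ 0 := by simp [card_univ]
  | succ n ih =>
      set B := ((univ : Finset (Fin (n + 1) → Fin N)).filter
        (fun g => ∀ j : Fin n, r (g j.castSucc) (g j.succ))) with hB
      have hsub : ((univ : Finset (Fin (n + 2) → Fin N)).filter
          (fun g => ∀ j : Fin (n + 1), r (g j.castSucc) (g j.succ))) ⊆
          B.biUnion (fun h => (univ.filter (fun v => r (h (Fin.last n)) v)).image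
            (fun v => Fin.snoc h v)) := by
        intro g hg
        rw [mem_filter] at hg
        obtain ⟨-, hg⟩ := hg
        rw [mem_biUnion]
        refine ⟨Fin.init g, ?_, ?_⟩
        · rw [hB, mem_filter]
          refine ⟨mem_univ _, fun j => ?_⟩
          have := hg j.castSucc
          rw [Fin.succ_castSucc] at this
          exact this
        · rw [mem_image]
          refine ⟨g (Fin.last (n + 1)), ?_, Fin.snoc_init_self g⟩
          rw [mem_filter]
          refine ⟨mem_univ _, ?_⟩
          have := hg (Fin.last n)
          simpa [Fin.init, Fin.succ_last] using this
      calc _ ≤ _ := card_le_card hsub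
        _ ≤ B.card * x := Finset.card_biUnion_le_card_mul _ _ _
            (fun h _ => (Finset.card_image_le).trans (hnb _))
        _ ≤ (N * x ^ n) * x := Nat.mul_le_mul_right _ ih
        _ = N * x ^ (n + 1) := by ring

open scoped Classical in
lemma fixed_count {t : ℕ} (f : Fin t → Fin N) (hf : Function.Injective f) :
    Fintype.card {τ : Equiv.Perm (Fin N) // ∀ i, τ (f i) = f i} = (N - t).factorial := by
  have e1 : Equiv.Perm {a : Fin N // a ∉ Set.range f} ≃
      {σ : Equiv.Perm (Fin N) // ∀ a, ¬ (a ∉ Set.range f) → σ a = a} :=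
    Equiv.Perm.subtypeEquivSubtypePerm (fun a => a ∉ Set.range f)
  have e2 : {σ : Equiv.Perm (Fin N) // ∀ a, ¬ (a ∉ Set.range f) → σ a = a} ≃
      {τ : Equiv.Perm (Fin N) // ∀ i, τ (f i) = f i} := by
    refine Equiv.subtypeEquivRight fun σ => ⟨fun h i => h (f i) (by simp), fun h a ha => ?_⟩
    obtain ⟨i, rfl⟩ := not_not.mp ha
    exact h i
  have hcard : Fintype.card {a : Fin N // a ∉ Set.range f} = N - t := by
    have h1 : Fintype.card {a : Fin N // a ∈ Set.range f} = t := by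
      rw [Fintype.card_congr (Equiv.ofInjective f hf).symm, Fintype.card_fin]
    have := Fintype.card_subtype_compl (fun a : Fin N => a ∈ Set.range f)
    rw [h1, Fintype.card_fin] at this
    exact this
  calc Fintype.card {τ : Equiv.Perm (Fin N) // ∀ i, τ (f i) = f i}
      = Fintype.card (Equiv.Perm {a : Fin N // a ∉ Set.range f}) :=
        (Fintype.card_congr (e1.trans e2)).symm
    _ = (N - t).factorial := by rw [Fintype.card_perm, hcard]

open scoped Classical in
lemma fiber_count {t : ℕ} (f g : Fin t → Fin N) (hf : Function.Injective f) :
    ((univ : Finset (Equiv.Perm (Fin N))).filter (fun σ => ∀ i, σ (f i) = g i)).card ≤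
      (N - t).factorial := by
  set A := ((univ : Finset (Equiv.Perm (Fin N))).filter (fun σ => ∀ i, σ (f i) = g i)) with hA
  rcases A.eq_empty_or_nonempty with h | ⟨σ₀, hσ₀⟩
  · simp [h]
  · rw [hA, mem_filter] at hσ₀
    have hmaps : ∀ σ ∈ A, σ₀⁻¹ * σ ∈
        (univ : Finset (Equiv.Perm (Fin N))).filter (fun τ => ∀ i, τ (f i) = f i) := by
      intro σ hσ
      rw [hA, mem_filter] at hσ
      rw [mem_filter]
      refine ⟨mem_univ _, fun i => ?_⟩
      have h0 : σ₀⁻¹ (g i) = f i := by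
        rw [← hσ₀.2 i]; exact Equiv.symm_apply_apply _ _
      simp [Equiv.Perm.mul_apply, hσ.2 i, h0]
    have hinj : Set.InjOn (fun σ => σ₀⁻¹ * σ) A := by
      intro a _ b _ hab
      exact mul_left_cancel hab
    calc A.card ≤ ((univ : Finset (Equiv.Perm (Fin N))).filter
          (fun τ => ∀ i, τ (f i) = f i)).card := card_le_card_of_injOn _ hmaps hinj
      _ = Fintype.card {τ : Equiv.Perm (Fin N) // ∀ i, τ (f i) = f i} :=
          (Fintype.card_subtype _).symm
      _ = (N - t).factorial := fixed_count f hf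

end Stmt9Aux

/-- Let `N, x, k` be positive integers with `k < N/2`, and let `r` be a symmetric
incidence relation on `N` elements in which every element is incident to at most `x`
others.  When a uniformly random ordering (permutation) is chosen and its `θN`-prefix
is taken, the probability that the prefix contains an increasing chain of `k+1`
elements with consecutive elements incident is at most
`C(⌊θN⌋, k+1)·(x/(N−k))^k ≤ N·(2exθ/(k+1))^{k+1}`. -/
theorem stmt9 (N x k : ℕ) (θ : ℝ) (hN : 0 < N) (hx : 0 < x) (hk : 0 < k)
    (hθ0 : 0 < θ) (hθ1 : θ < 1) (hkN : 2 * k < N)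
    (r : Fin N → Fin N → Prop) (hsymm : ∀ u v, r u v → r v u)
    (hdeg : ∀ u, Set.ncard {v | r u v} ≤ x) :
    (Set.ncard {σ : Equiv.Perm (Fin N) | ∃ f : Fin (k + 1) → Fin N, StrictMono f ∧
        (∀ j, (f j : ℕ) < ⌊θ * N⌋₊) ∧
        ∀ j : Fin k, r (σ (f j.castSucc)) (σ (f j.succ))} : ℝ) ≤
      (Nat.choose ⌊θ * N⌋₊ (k + 1) : ℝ) * ((x : ℝ) / ((N : ℝ) - k)) ^ k *
        (Nat.factorial N : ℝ) ∧
    (Nat.choose ⌊θ * N⌋₊ (k + 1) : ℝ) * ((x : ℝ) / ((N : ℝ) - k)) ^ k ≤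
      (N : ℝ) * (2 * Real.exp 1 * x * θ / (k + 1)) ^ (k + 1) := by
  classical
  set m : ℕ := ⌊θ * N⌋₊ with hm
  have hkN' : k + 1 ≤ N := by omega
  have hmN : m ≤ N := by
    have h1 : θ * N ≤ (N : ℝ) := by nlinarith [show (0:ℝ) < (N:ℝ) by exact_mod_cast hN]
    calc m ≤ ⌊(N : ℝ)⌋₊ := Nat.floor_le_floor h1
      _ = N := Nat.floor_natCast N
  -- Finsets
  set F : Finset (Fin (k + 1) → Fin N) :=
    univ.filter (fun f => StrictMono f ∧ ∀ j, (f j : ℕ) < m) with hF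
  set G : Finset (Fin (k + 1) → Fin N) :=
    univ.filter (fun g => ∀ j : Fin k, r (g j.castSucc) (g j.succ)) with hG
  set Sfin : Finset (Equiv.Perm (Fin N)) :=
    univ.filter (fun σ => ∃ f : Fin (k + 1) → Fin N, StrictMono f ∧
      (∀ j, (f j : ℕ) < m) ∧ ∀ j : Fin k, r (σ (f j.castSucc)) (σ (f j.succ))) with hSfin
  have hncard : (Set.ncard {σ : Equiv.Perm (Fin N) | ∃ f : Fin (k + 1) → Fin N, StrictMono f ∧
      (∀ j, (f j : ℕ) < m) ∧ ∀ j : Fin k, r (σ (f j.castSucc)) (σ (f j.succ))}) = Sfin.card := by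
    rw [← Set.ncard_coe_finset]
    congr 1
    ext σ
    simp [hSfin]
  clear_value m F G Sfin
  -- card of F
  have hFcard : F.card ≤ m.choose (k + 1) := by
    set T : Finset (Fin N) := univ.filter (fun v => (v : ℕ) < m) with hT
    have hTcard : T.card = m := by
      have h1 : T.card = Fintype.card {v : Fin N // (v : ℕ) < m} :=
        (Fintype.card_subtype _).symm
      have e : {v : Fin N // (v : ℕ) < m} ≃ Fin m :=
        { toFun := fun v => ⟨v.1.1, v.2⟩
          invFun := fun i => ⟨⟨i.1, lt_of_lt_of_le i.2 hmN⟩, i.2⟩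
          left_inv := fun v => Subtype.ext (Fin.ext rfl)
          right_inv := fun i => Fin.ext rfl }
      rw [h1, Fintype.card_congr e, Fintype.card_fin]
    have hmaps : ∀ f ∈ F, univ.image f ∈ T.powersetCard (k + 1) := by
      intro f hf
      rw [hF, mem_filter] at hf
      rw [mem_powersetCard]
      constructor
      · intro v hv
        rw [mem_image] at hv
        obtain ⟨j, -, rfl⟩ := hv
        rw [hT, mem_filter]
        exact ⟨mem_univ _, hf.2.2 j⟩
      · rw [card_image_of_injective _ hf.2.1.injective, card_univ, Fintype.card_fin]
    have hinj : Set.InjOn (fun f => univ.image f) (F : Set (Fin (k + 1) → Fin N)) := by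
      intro f hf g hg hfg
      simp only [hF, Finset.coe_filter, Set.mem_setOf_eq] at hf hg
      have hfg' : univ.image f = univ.image g := hfg
      have hcardf : (univ.image f).card = k + 1 := by
        rw [card_image_of_injective _ hf.2.1.injective, card_univ, Fintype.card_fin]
      have h1 : f = (univ.image f).orderEmbOfFin hcardf :=
        orderEmbOfFin_unique hcardf (fun j => mem_image_of_mem f (mem_univ j)) hf.2.1
      have h2 : g = (univ.image f).orderEmbOfFin hcardf := by
        refine orderEmbOfFin_unique hcardf (fun j => ?_) hg.2.1
        rw [hfg']; exact mem_image_of_mem g (mem_univ j)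
      rw [h1, h2]
    calc F.card ≤ (T.powersetCard (k + 1)).card := card_le_card_of_injOn _ hmaps hinj
      _ = m.choose (k + 1) := by rw [card_powersetCard, hTcard]
  -- main subset and card bound
  have hsub : Sfin ⊆ F.biUnion (fun f => G.biUnion (fun g =>
      univ.filter (fun σ : Equiv.Perm (Fin N) => ∀ i, σ (f i) = g i))) := by
    intro σ hσ
    rw [hSfin, mem_filter] at hσ
    obtain ⟨-, f, hf1, hf2, hf3⟩ := hσ
    rw [mem_biUnion]
    refine ⟨f, by rw [hF, mem_filter]; exact ⟨mem_univ _, hf1, hf2⟩, ?_⟩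
    rw [mem_biUnion]
    refine ⟨σ ∘ f, by rw [hG, mem_filter]; exact ⟨mem_univ _, fun j => hf3 j⟩, ?_⟩
    rw [mem_filter]
    exact ⟨mem_univ _, fun i => rfl⟩
  have hmain : Sfin.card ≤ m.choose (k + 1) * (N * x ^ k * (N - (k + 1)).factorial) := by
    calc Sfin.card ≤ _ := card_le_card hsub
      _ ≤ F.card * (N * x ^ k * (N - (k + 1)).factorial) := by
          refine Finset.card_biUnion_le_card_mul _ _ _ (fun f hf => ?_)
          rw [hF, mem_filter] at hf
          calc (G.biUnion (fun g =>
              univ.filter (fun σ : Equiv.Perm (Fin N) => ∀ i, σ (f i) = g i))).card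
              ≤ G.card * (N - (k + 1)).factorial :=
                Finset.card_biUnion_le_card_mul _ _ _
                  (fun g _ => Stmt9Aux.fiber_count f g hf.2.1.injective)
            _ ≤ (N * x ^ k) * (N - (k + 1)).factorial := by
                rw [hG]
                exact Nat.mul_le_mul_right _ (Stmt9Aux.chain_count hdeg k)
      _ ≤ m.choose (k + 1) * (N * x ^ k * (N - (k + 1)).factorial) :=
          Nat.mul_le_mul_right _ hFcard
  -- numeric facts
  have h8 : (N - k) ^ k * (N - (k + 1)).factorial ≤ (N - 1).factorial := by
    have hd : (N - k) ^ k ≤ (N - 1).descFactorial k := by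
      have := Nat.pow_sub_le_descFactorial (N - 1) k
      have hN1 : N - 1 + 1 = N := Nat.succ_pred_eq_of_pos hN
      rwa [hN1] at this
    have hdf : (N - 1).descFactorial k * (N - (k + 1)).factorial = (N - 1).factorial := by
      have h1 : (N - 1).descFactorial k = (N - 1).choose k * k.factorial := by
        rw [Nat.descFactorial_eq_factorial_mul_choose]; ring
      have h2 : N - 1 - k = N - (k + 1) := by rw [Nat.sub_sub, Nat.add_comm]
      rw [h1, ← h2, Nat.choose_mul_factorial_mul_factorial (Nat.le_sub_one_of_lt (Nat.lt_of_lt_of_le k.lt_succ_self hkN'))]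
    calc (N - k) ^ k * (N - (k + 1)).factorial
        ≤ (N - 1).descFactorial k * (N - (k + 1)).factorial := Nat.mul_le_mul_right _ hd
      _ = (N - 1).factorial := hdf
  have key2 : Sfin.card * (N - k) ^ k ≤ m.choose (k + 1) * x ^ k * N.factorial := by
    calc Sfin.card * (N - k) ^ k
        ≤ (m.choose (k + 1) * (N * x ^ k * (N - (k + 1)).factorial)) * (N - k) ^ k :=
          Nat.mul_le_mul_right _ hmain
      _ = m.choose (k + 1) * (x ^ k * (N * ((N - k) ^ k * (N - (k + 1)).factorial))) := by ring
      _ ≤ m.choose (k + 1) * (x ^ k * (N * (N - 1).factorial)) := by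
          refine Nat.mul_le_mul_left _ (Nat.mul_le_mul_left _ (Nat.mul_le_mul_left _ h8))
      _ = m.choose (k + 1) * x ^ k * N.factorial := by
          rw [Nat.mul_factorial_pred hN.ne']; ring
  -- real versions
  have hkcast : ((N - k : ℕ) : ℝ) = (N : ℝ) - k := by
    rw [Nat.cast_sub (Nat.le_of_lt (Nat.lt_of_lt_of_le k.lt_succ_self hkN'))]
  have hcpos : (0 : ℝ) < (N : ℝ) - k := by
    rw [← hkcast]; exact_mod_cast Nat.sub_pos_of_lt (Nat.lt_of_lt_of_le k.lt_succ_self hkN')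
  constructor
  · -- part 1
    rw [hncard]
    have hrhs : (m.choose (k + 1) : ℝ) * ((x : ℝ) / ((N : ℝ) - k)) ^ k * N.factorial
        = (m.choose (k + 1) * x ^ k * N.factorial : ℝ) / ((N : ℝ) - k) ^ k := by
      have hne := hcpos.ne'
      rw [div_pow]
      field_simp
    rw [hrhs, le_div_iff₀ (pow_pos hcpos k)]
    calc (Sfin.card : ℝ) * ((N : ℝ) - k) ^ k
        = ((Sfin.card * (N - k) ^ k : ℕ) : ℝ) := by push_cast [hkcast]; ring
      _ ≤ ((m.choose (k + 1) * x ^ k * N.factorial : ℕ) : ℝ) := by exact_mod_cast key2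
      _ = (m.choose (k + 1) * x ^ k * N.factorial : ℝ) := by push_cast; ring
  · -- part 2
    set e : ℝ := Real.exp 1 with he
    have hepos : 0 < e := Real.exp_pos 1
    have hm_le : (m : ℝ) ≤ θ * N := by
      rw [hm]; exact Nat.floor_le (by positivity)
    have h1 : (m.choose (k + 1) : ℝ) ≤ (m : ℝ) ^ (k + 1) / (k + 1).factorial :=
      Nat.choose_le_pow_div (k + 1) m
    have hxpos : (0 : ℝ) < x := by exact_mod_cast hx
    have hNpos : (0 : ℝ) < N := by exact_mod_cast hN
    have h2k : 2 * (k : ℝ) < N := by exact_mod_cast hkN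
    have hc2 : (x : ℝ) / ((N : ℝ) - k) ≤ 2 * x / N := by
      rw [div_le_div_iff₀ hcpos hNpos]
      nlinarith
    have h2 : ((x : ℝ) / ((N : ℝ) - k)) ^ k ≤ (2 * x / N) ^ k :=
      pow_le_pow_left₀ (by positivity) hc2 k
    have h3 : ((k : ℝ) + 1) ^ (k + 1) / (k + 1).factorial ≤ e ^ (k + 1) := by
      have hh := Real.pow_div_factorial_le_exp (x := (k : ℝ) + 1) (by positivity) (k + 1)
      rw [he, Real.exp_one_pow]
      have hc : ((k + 1 : ℕ) : ℝ) = (k : ℝ) + 1 := by push_cast; ring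
      rw [hc]
      exact hh
    have hfpos : (0 : ℝ) < (k + 1).factorial := by exact_mod_cast (k + 1).factorial_pos
    have hk1pos : (0 : ℝ) < ((k : ℝ) + 1) ^ (k + 1) := by positivity
    have h3' : 1 / ((k + 1).factorial : ℝ) ≤ e ^ (k + 1) / ((k : ℝ) + 1) ^ (k + 1) := by
      rw [div_le_div_iff₀ hfpos hk1pos, one_mul]
      rw [div_le_iff₀ hfpos] at h3
      linarith
    have step1 : (m.choose (k + 1) : ℝ) * ((x : ℝ) / ((N : ℝ) - k)) ^ k
        ≤ ((m : ℝ) ^ (k + 1) / (k + 1).factorial) * (2 * x / N) ^ k := by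
      refine mul_le_mul h1 h2 (by positivity) (by positivity)
    have step2 : ((m : ℝ) ^ (k + 1) / (k + 1).factorial) * (2 * x / N) ^ k
        ≤ ((θ * N) ^ (k + 1) / (k + 1).factorial) * (2 * x / N) ^ k := by
      gcongr
    have step3 : ((θ * N) ^ (k + 1) / (k + 1).factorial) * (2 * x / N) ^ k
        ≤ ((θ * N) ^ (k + 1) * (e ^ (k + 1) / ((k : ℝ) + 1) ^ (k + 1))) * (2 * x / N) ^ k := by
      have : (θ * N) ^ (k + 1) / (k + 1).factorial
          = (θ * N) ^ (k + 1) * (1 / ((k + 1).factorial : ℝ)) := by ring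
      rw [this]
      gcongr
    have step4 : ((θ * N) ^ (k + 1) * (e ^ (k + 1) / ((k : ℝ) + 1) ^ (k + 1))) * (2 * x / N) ^ k
        ≤ (N : ℝ) * (2 * e * x * θ / ((k : ℝ) + 1)) ^ (k + 1) := by
      have hA : ((θ * N) ^ (k + 1) * (e ^ (k + 1) / ((k : ℝ) + 1) ^ (k + 1))) * (2 * x / N) ^ k
          = (N : ℝ) * (θ * e / ((k : ℝ) + 1)) ^ (k + 1) * (2 * x) ^ k := by
        have hk10 : (k : ℝ) + 1 ≠ 0 := by positivity
        have hN0 := hNpos.ne'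
        simp only [div_pow, mul_pow]
        field_simp
        ring
      have hB : (N : ℝ) * (2 * e * x * θ / ((k : ℝ) + 1)) ^ (k + 1)
          = (N : ℝ) * (θ * e / ((k : ℝ) + 1)) ^ (k + 1) * (2 * x) ^ (k + 1) := by
        rw [show (2 * e * (x : ℝ) * θ / ((k : ℝ) + 1)) = (θ * e / ((k : ℝ) + 1)) * (2 * x) by
          ring, mul_pow, ← mul_assoc]
      rw [hA, hB]
      refine mul_le_mul_of_nonneg_left ?_ (by positivity)
      refine pow_le_pow_right₀ (by
        have h1x : (1 : ℝ) ≤ x := by exact_mod_cast hx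
        linarith) (Nat.le_succ k)
    exact le_trans (le_trans (le_trans step1 step2) step3) step4
end

section
/- Let G(V, U, E) be a bipartite graph, π an arbitrary ordering of E, p ∈ (0,1), and M an arbitrary matching in G. Let W ⊆ V include each vertex of V independently with probability p, and let X be the number of edges of M whose V-endpoint is matched in the greedy maximal matching of the induced subgraph G[W ∪ U] computed in order π. Then E_W[X] ≥ p(|M| − 2p|V|). -/
variable {V U : Type*} [DecidableEq V] [DecidableEq U]

/-- One step of the greedy matching: add the edge `e` if both endpoints are unmatched. -/
def greedyStep (acc : List (V × U)) (e : V × U) : List (V × U) :=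
  if ∀ f ∈ acc, e.1 ≠ f.1 ∧ e.2 ≠ f.2 then e :: acc else acc

/-- The greedy maximal matching obtained by scanning the edges of a bipartite graph in
the order of the list `L`. -/
def greedyMM (L : List (V × U)) : List (V × U) := L.foldl greedyStep []

lemma mem_greedyStep {acc : List (V × U)} {a : V × U} (ha : a ∈ acc) (e : V × U) :
    a ∈ greedyStep acc e := by
  unfold greedyStep; split <;> simp [ha]

lemma mem_foldl_greedy {a : V × U} : ∀ (L : List (V × U)) (acc : List (V × U)),
    a ∈ acc → a ∈ L.foldl greedyStep acc
  | [], _, h => h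
  | e :: L, acc, h => mem_foldl_greedy L (greedyStep acc e) (mem_greedyStep h e)

lemma mem_of_mem_greedyStep {acc : List (V × U)} {a e : V × U}
    (ha : a ∈ greedyStep acc e) : a = e ∨ a ∈ acc := by
  unfold greedyStep at ha; split at ha
  · exact List.mem_cons.1 ha
  · exact Or.inr ha

lemma mem_of_mem_foldl_greedy {a : V × U} : ∀ (L : List (V × U)) (acc : List (V × U)),
    a ∈ L.foldl greedyStep acc → a ∈ L ∨ a ∈ acc
  | [], acc, h => Or.inr h
  | e :: L, acc, h => by
    rcases mem_of_mem_foldl_greedy L (greedyStep acc e) h with h' | h'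
    · exact Or.inl (List.mem_cons_of_mem _ h')
    · rcases mem_of_mem_greedyStep h' with h'' | h''
      · exact Or.inl (h'' ▸ List.mem_cons_self)
      · exact Or.inr h''

lemma pairwise_foldl_greedy : ∀ (L : List (V × U)) (acc : List (V × U)),
    acc.Pairwise (fun f g => f.1 ≠ g.1 ∧ f.2 ≠ g.2) →
    (L.foldl greedyStep acc).Pairwise (fun f g => f.1 ≠ g.1 ∧ f.2 ≠ g.2)
  | [], _, h => h
  | e :: L, acc, h => by
    refine pairwise_foldl_greedy L (greedyStep acc e) ?_
    unfold greedyStep; split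
    · exact List.Pairwise.cons (by assumption) h
    · exact h

lemma maximal_foldl_greedy {e : V × U} : ∀ (L : List (V × U)) (acc : List (V × U)),
    e ∈ L → ∃ f ∈ L.foldl greedyStep acc, f.1 = e.1 ∨ f.2 = e.2
  | e' :: L, acc, he => by
    rcases List.mem_cons.1 he with rfl | h
    · by_cases hc : ∀ f ∈ acc, e.1 ≠ f.1 ∧ e.2 ≠ f.2
      · refine ⟨e, mem_foldl_greedy L _ ?_, Or.inl rfl⟩
        unfold greedyStep
        rw [if_pos hc]
        exact List.mem_cons_self
      · push_neg at hc
        obtain ⟨f, hf, hf2⟩ := hc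
        refine ⟨f, mem_foldl_greedy L _ (mem_greedyStep hf _), ?_⟩
        by_cases h1 : e.1 = f.1
        · exact Or.inl h1.symm
        · exact Or.inr (hf2 h1).symm
    · exact maximal_foldl_greedy L (greedyStep acc e') h

lemma stable_foldl_greedy (v : V) : ∀ (L : List (V × U)) (acc : List (V × U)),
    (∀ f ∈ L.foldl greedyStep acc, f.1 ≠ v) →
    (L.filter fun e => e.1 ≠ v).foldl greedyStep acc = L.foldl greedyStep acc
  | [], _, _ => rfl
  | e :: L, acc, h => by
    simp only [List.foldl_cons] at h
    by_cases hev : e.1 = v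
    · have hstep : greedyStep acc e = acc := by
        unfold greedyStep
        rw [if_neg]
        intro hc
        have he : e ∈ L.foldl greedyStep (greedyStep acc e) := by
          unfold greedyStep
          rw [if_pos hc]
          exact mem_foldl_greedy L _ List.mem_cons_self
        exact h e he hev
      rw [hstep] at h
      rw [List.filter_cons_of_neg (by simp [hev]), List.foldl_cons, hstep]
      exact stable_foldl_greedy v L acc h
    · rw [List.filter_cons_of_pos (by simp [hev]), List.foldl_cons, List.foldl_cons]
      exact stable_foldl_greedy v L (greedyStep acc e) h

lemma greedy_erase (L : List (V × U)) (W : Finset V) (v : V)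
    (h : ∀ f ∈ greedyMM (L.filter fun e => e.1 ∈ W), f.1 ≠ v) :
    greedyMM (L.filter fun e => e.1 ∈ W.erase v)
      = greedyMM (L.filter fun e => e.1 ∈ W) := by
  have h1 : (L.filter fun e => e.1 ∈ W.erase v)
      = ((L.filter fun e => e.1 ∈ W).filter fun e => e.1 ≠ v) := by
    rw [List.filter_filter]
    apply List.filter_congr
    intro a _
    by_cases h1 : a.1 = v <;> by_cases h2 : a.1 ∈ W <;>
      simp [Finset.mem_erase, h1, h2]
  rw [h1]
  unfold greedyMM at h ⊢
  exact stable_foldl_greedy v _ [] h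

lemma card_matchedU_le (L : List (V × U)) (W : Finset V) (M : Finset (V × U))
    (hM : ∀ e ∈ M, ∀ f ∈ M, e ≠ f → e.1 ≠ f.1 ∧ e.2 ≠ f.2) :
    (M.filter fun e => ∃ f ∈ greedyMM (L.filter fun e' => e'.1 ∈ W), f.2 = e.2).card
      ≤ W.card := by
  classical
  have hpw : (greedyMM (L.filter fun e' => e'.1 ∈ W)).Pairwise
      (fun f g' => f.1 ≠ g'.1 ∧ f.2 ≠ g'.2) :=
    pairwise_foldl_greedy _ [] List.Pairwise.nil
  have hsym : Symmetric (fun f g' : V × U => f.1 ≠ g'.1 ∧ f.2 ≠ g'.2) :=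
    fun a b h => ⟨h.1.symm, h.2.symm⟩
  have huniq : ∀ f ∈ greedyMM (L.filter fun e' => e'.1 ∈ W),
      ∀ f' ∈ greedyMM (L.filter fun e' => e'.1 ∈ W), f.1 = f'.1 → f = f' := by
    intro f hf f' hf' h1
    by_contra hne
    have : Std.Symm (fun f g' : V × U => f.1 ≠ g'.1 ∧ f.2 ≠ g'.2) := ⟨fun a b h => hsym h⟩
    exact (List.Pairwise.forall hpw hf hf' hne).1 h1
  have hmemW : ∀ f ∈ greedyMM (L.filter fun e' => e'.1 ∈ W), f.1 ∈ W := by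
    intro f hf
    rcases mem_of_mem_foldl_greedy _ [] hf with h | h
    · simpa using (List.mem_filter.1 h).2
    · simp at h
  apply Finset.card_le_card_of_injOn
    (fun e => if h : ∃ f ∈ greedyMM (L.filter fun e' => e'.1 ∈ W), f.2 = e.2
      then h.choose.1 else e.1)
  · intro e he
    have hex : ∃ f ∈ greedyMM (L.filter fun e' => e'.1 ∈ W), f.2 = e.2 :=
      (Finset.mem_filter.1 he).2
    beta_reduce
    rw [dif_pos hex]
    exact hmemW _ hex.choose_spec.1
  · intro e he e' he' hphi
    simp only [Finset.mem_coe] at he he'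
    have hex : ∃ f ∈ greedyMM (L.filter fun e' => e'.1 ∈ W), f.2 = e.2 :=
      (Finset.mem_filter.1 he).2
    have hex' : ∃ f ∈ greedyMM (L.filter fun e' => e'.1 ∈ W), f.2 = e'.2 :=
      (Finset.mem_filter.1 he').2
    simp only [dif_pos hex, dif_pos hex'] at hphi
    have hff := huniq _ hex.choose_spec.1 _ hex'.choose_spec.1 hphi
    by_contra hne
    have h2 : e.2 = e'.2 := by
      rw [← hex.choose_spec.2, ← hex'.choose_spec.2, hff]
    exact (hM e (Finset.mem_filter.1 he).1 e' (Finset.mem_filter.1 he').1 hne).2 h2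

section prob
variable [Fintype V]

noncomputable def wgt (p : ℝ) (W : Finset V) : ℝ :=
  p ^ W.card * (1 - p) ^ (Fintype.card V - W.card)

lemma wgt_nonneg {p : ℝ} (hp0 : 0 ≤ p) (hp1 : p ≤ 1) (W : Finset V) : 0 ≤ wgt p W :=
  mul_nonneg (pow_nonneg hp0 _) (pow_nonneg (by linarith) _)

lemma sum_wgt (p : ℝ) : ∑ W : Finset V, wgt p W = 1 := by
  have h := Finset.prod_add (fun _ : V => p) (fun _ : V => 1 - p) Finset.univ
  have h2 : p + (1 - p) = 1 := by ring
  simp only [Finset.prod_const, Finset.powerset_univ, h2, one_pow,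
    Finset.card_univ_diff] at h
  simp only [wgt]
  exact h.symm

lemma wgt_insert {p : ℝ} (v : V) (W : Finset V) (hv : v ∉ W) :
    (1 - p) * wgt p (insert v W) = p * wgt p W := by
  have hc : (insert v W).card = W.card + 1 := Finset.card_insert_of_notMem hv
  have hn : W.card + 1 ≤ Fintype.card V := by
    simpa [hc] using Finset.card_le_univ (insert v W)
  have h2 : Fintype.card V - W.card = (Fintype.card V - (W.card + 1)) + 1 := by omega
  unfold wgt
  rw [hc, h2, pow_succ, pow_succ]
  ring

lemma transfer {p : ℝ} (v : V) (F : Finset V → ℝ) :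
    (1 - p) * ∑ W ∈ Finset.univ.filter (fun W : Finset V => v ∈ W),
        wgt p W * F (W.erase v)
      = p * ∑ W ∈ Finset.univ.filter (fun W : Finset V => v ∉ W),
        wgt p W * F W := by
  rw [Finset.mul_sum, Finset.mul_sum]
  apply Finset.sum_bij' (i := fun (W : Finset V) _ => W.erase v)
    (j := fun (W : Finset V) _ => insert v W)
  · intro W hW
    simp only [Finset.mem_filter, Finset.mem_univ, true_and] at hW ⊢
    exact Finset.notMem_erase v W
  · intro W hW
    simp only [Finset.mem_filter, Finset.mem_univ, true_and] at hW ⊢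
    exact Finset.mem_insert_self v W
  · intro W hW
    simp only [Finset.mem_filter, Finset.mem_univ, true_and] at hW
    exact Finset.insert_erase hW
  · intro W hW
    simp only [Finset.mem_filter, Finset.mem_univ, true_and] at hW
    exact Finset.erase_insert hW
  · intro W hW
    simp only [Finset.mem_filter, Finset.mem_univ, true_and] at hW
    have hkey : (1 - p) * wgt p W = p * wgt p (W.erase v) := by
      have h := wgt_insert (p := p) v (W.erase v) (Finset.notMem_erase v W)
      rwa [Finset.insert_erase hW] at h
    rw [← mul_assoc, ← mul_assoc, hkey]

lemma sum_wgt_mem {p : ℝ} (hp0 : 0 < p) (hp1 : p < 1) (v : V) :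
    ∑ W ∈ Finset.univ.filter (fun W : Finset V => v ∈ W), wgt p W = p := by
  have ht := transfer (p := p) v (fun _ => (1 : ℝ))
  simp only [mul_one] at ht
  have hsplit := Finset.sum_filter_add_sum_filter_not Finset.univ
    (fun W : Finset V => v ∈ W) (wgt p)
  rw [sum_wgt p] at hsplit
  nlinarith [ht, hsplit]

lemma sum_wgt_card {p : ℝ} (hp0 : 0 < p) (hp1 : p < 1) :
    ∑ W : Finset V, wgt p W * (W.card : ℝ) = p * (Fintype.card V : ℝ) := by
  have h1 : ∀ W : Finset V, (W.card : ℝ) = ∑ v : V, (if v ∈ W then (1:ℝ) else 0) := by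
    intro W
    rw [Finset.sum_ite_mem, Finset.univ_inter, Finset.sum_const, nsmul_eq_mul, mul_one]
  have h2 : ∀ v : V, ∑ W : Finset V, wgt p W * (if v ∈ W then (1:ℝ) else 0) = p := by
    intro v
    have he : ∀ W : Finset V, wgt p W * (if v ∈ W then (1:ℝ) else 0)
        = if v ∈ W then wgt p W else 0 := fun W => by split <;> simp
    simp_rw [he]
    rw [← Finset.sum_filter]
    exact sum_wgt_mem hp0 hp1 v
  calc ∑ W : Finset V, wgt p W * (W.card : ℝ)
      = ∑ W : Finset V, ∑ v : V, wgt p W * (if v ∈ W then (1:ℝ) else 0) := by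
        simp_rw [← Finset.mul_sum, ← h1]
    _ = ∑ v : V, ∑ W : Finset V, wgt p W * (if v ∈ W then (1:ℝ) else 0) :=
        Finset.sum_comm
    _ = ∑ v : V, p := Finset.sum_congr rfl fun v _ => h2 v
    _ = p * (Fintype.card V : ℝ) := by simp [mul_comm]

end prob

section ind
variable [Fintype V]

noncomputable def indV (L : List (V × U)) (e : V × U) (W : Finset V) : ℝ :=
  if ∃ f ∈ greedyMM (L.filter fun e' => e'.1 ∈ W), f.1 = e.1 then 1 else 0

noncomputable def indU (L : List (V × U)) (e : V × U) (W : Finset V) : ℝ :=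
  if ∃ f ∈ greedyMM (L.filter fun e' => e'.1 ∈ W), f.2 = e.2 then 1 else 0

lemma indV_nonneg (L : List (V × U)) (e : V × U) (W : Finset V) : 0 ≤ indV L e W := by
  unfold indV; split <;> norm_num

lemma indU_nonneg (L : List (V × U)) (e : V × U) (W : Finset V) : 0 ≤ indU L e W := by
  unfold indU; split <;> norm_num

end ind
/-- [BLM20, Lemma 5.2].  Let `G(V, U, E)` be a bipartite graph whose edges, in the order
`π`, are the list `L`; let `M ⊆ E` be a matching and `p ∈ (0,1)`.  Sample `W ⊆ V` by
keeping each vertex independently with probability `p`, and let `X` be the number of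
edges of `M` whose `V`-endpoint is matched in `GreedyMM(G[W ∪ U], π)`.  Then
`E_W[X] ≥ p(|M| − 2p|V|)`. -/
theorem stmt12 [Fintype V] (L : List (V × U)) (M : Finset (V × U))
    (hML : ∀ e ∈ M, e ∈ L)
    (hM : ∀ e ∈ M, ∀ f ∈ M, e ≠ f → e.1 ≠ f.1 ∧ e.2 ≠ f.2)
    (p : ℝ) (hp0 : 0 < p) (hp1 : p < 1) :
    p * ((M.card : ℝ) - 2 * p * (Fintype.card V : ℝ)) ≤
      ∑ W : Finset V, p ^ W.card * (1 - p) ^ (Fintype.card V - W.card) *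
        ((M.filter (fun e =>
          ∃ f ∈ greedyMM (L.filter (fun e' => e'.1 ∈ W)), f.1 = e.1)).card : ℝ) := by
  classical
  have hp0' : (0:ℝ) ≤ p := le_of_lt hp0
  have h1p : (0:ℝ) < 1 - p := by linarith
  have hn0 : (0:ℝ) ≤ (Fintype.card V : ℝ) := Nat.cast_nonneg _
  -- rewrite RHS
  have hcardV : ∀ W : Finset V,
      ((M.filter fun e => ∃ f ∈ greedyMM (L.filter fun e' => e'.1 ∈ W),
          f.1 = e.1).card : ℝ) = ∑ e ∈ M, indV L e W := by
    intro W
    rw [Finset.card_filter]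
    push_cast
    refine Finset.sum_congr rfl fun e _ => ?_
    by_cases h : ∃ f ∈ greedyMM (L.filter fun e' => e'.1 ∈ W), f.1 = e.1 <;>
      simp [indV, h]
  have hcardU : ∀ W : Finset V,
      ((M.filter fun e => ∃ f ∈ greedyMM (L.filter fun e' => e'.1 ∈ W),
          f.2 = e.2).card : ℝ) = ∑ e ∈ M, indU L e W := by
    intro W
    rw [Finset.card_filter]
    push_cast
    refine Finset.sum_congr rfl fun e _ => ?_
    by_cases h : ∃ f ∈ greedyMM (L.filter fun e' => e'.1 ∈ W), f.2 = e.2 <;>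
      simp [indU, h]
  have hgoal : ∑ W : Finset V, p ^ W.card * (1 - p) ^ (Fintype.card V - W.card) *
        ((M.filter (fun e =>
          ∃ f ∈ greedyMM (L.filter (fun e' => e'.1 ∈ W)), f.1 = e.1)).card : ℝ)
      = ∑ e ∈ M, ∑ W : Finset V, wgt p W * indV L e W := by
    rw [Finset.sum_comm]
    refine Finset.sum_congr rfl fun W _ => ?_
    rw [← Finset.mul_sum, ← hcardV W]
    rfl
  rw [hgoal]
  -- per-edge key inequality
  have key : ∀ e ∈ M, (1 - p) * (p - ∑ W : Finset V, wgt p W * indV L e W)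
      ≤ p * ∑ W : Finset V, wgt p W * indU L e W := by
    intro e he
    have hpt : ∀ W ∈ Finset.univ.filter (fun W : Finset V => e.1 ∈ W),
        wgt p W ≤ wgt p W * indV L e W + wgt p W * indU L e (W.erase e.1) := by
      intro W hW
      rw [Finset.mem_filter] at hW
      have hwnn := wgt_nonneg hp0' hp1.le W
      by_cases hv : ∃ f ∈ greedyMM (L.filter fun e' => e'.1 ∈ W), f.1 = e.1
      · have h1 : indV L e W = 1 := by unfold indV; rw [if_pos hv]
        have h2 : (0:ℝ) ≤ wgt p W * indU L e (W.erase e.1) :=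
          mul_nonneg hwnn (indU_nonneg _ _ _)
        rw [h1]
        linarith
      · have hne : ∀ f ∈ greedyMM (L.filter fun e' => e'.1 ∈ W), f.1 ≠ e.1 := by
          intro f hf h
          exact hv ⟨f, hf, h⟩
        have heq := greedy_erase L W e.1 hne
        have hmem : e ∈ L.filter fun e' => e'.1 ∈ W :=
          List.mem_filter.2 ⟨hML e he, by simpa using hW.2⟩
        obtain ⟨f, hf, hf2⟩ := maximal_foldl_greedy (e := e) _ [] hmem
        rcases hf2 with h | h
        · exact absurd ⟨f, hf, h⟩ hv
        · have hU : indU L e (W.erase e.1) = 1 := by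
            unfold indU
            rw [if_pos]
            rw [heq]
            exact ⟨f, hf, h⟩
          have h1 : indV L e W = 0 := by unfold indV; rw [if_neg hv]
          rw [h1, hU]
          ring_nf
          exact le_refl _
    have hsum := Finset.sum_le_sum hpt
    rw [Finset.sum_add_distrib] at hsum
    rw [sum_wgt_mem hp0 hp1 e.1] at hsum
    have h3 : ∑ W ∈ Finset.univ.filter (fun W : Finset V => e.1 ∈ W),
          wgt p W * indV L e W ≤ ∑ W : Finset V, wgt p W * indV L e W :=
      Finset.sum_le_sum_of_subset_of_nonneg (Finset.filter_subset _ _)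
        (fun W _ _ => mul_nonneg (wgt_nonneg hp0' hp1.le W) (indV_nonneg _ _ _))
    have htrans : (1 - p) * ∑ W ∈ Finset.univ.filter (fun W : Finset V => e.1 ∈ W),
          wgt p W * indU L e (W.erase e.1)
        = p * ∑ W ∈ Finset.univ.filter (fun W : Finset V => e.1 ∉ W),
          wgt p W * indU L e W := transfer e.1 (fun W' => indU L e W')
    have hsub : ∑ W ∈ Finset.univ.filter (fun W : Finset V => e.1 ∉ W),
          wgt p W * indU L e W ≤ ∑ W : Finset V, wgt p W * indU L e W :=
      Finset.sum_le_sum_of_subset_of_nonneg (Finset.filter_subset _ _)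
        (fun W _ _ => mul_nonneg (wgt_nonneg hp0' hp1.le W) (indU_nonneg _ _ _))
    set S := ∑ W : Finset V, wgt p W * indV L e W
    set T := ∑ W : Finset V, wgt p W * indU L e W
    set S' := ∑ W ∈ Finset.univ.filter (fun W : Finset V => e.1 ∈ W),
      wgt p W * indV L e W
    set A := ∑ W ∈ Finset.univ.filter (fun W : Finset V => e.1 ∈ W),
      wgt p W * indU L e (W.erase e.1)
    set B := ∑ W ∈ Finset.univ.filter (fun W : Finset V => e.1 ∉ W),
      wgt p W * indU L e W
    -- p ≤ S' + A ≤ S + A ; (1-p) A = p B ; B ≤ T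
    have e1 : (1 - p) * (p - S) ≤ (1 - p) * A := by nlinarith
    have e2 : p * B ≤ p * T := by nlinarith
    linarith [htrans]
  -- counting bound
  have hT : ∑ e ∈ M, ∑ W : Finset V, wgt p W * indU L e W
      ≤ p * (Fintype.card V : ℝ) := by
    have hc : ∑ e ∈ M, ∑ W : Finset V, wgt p W * indU L e W
        ≤ ∑ W : Finset V, wgt p W * (W.card : ℝ) := by
      rw [Finset.sum_comm]
      refine Finset.sum_le_sum fun W _ => ?_
      rw [← Finset.mul_sum, ← hcardU W]
      refine mul_le_mul_of_nonneg_left ?_ (wgt_nonneg hp0' hp1.le W)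
      exact_mod_cast card_matchedU_le L W M hM
    rw [sum_wgt_card hp0 hp1] at hc
    exact hc
  -- assemble
  have hkeysum := Finset.sum_le_sum key
  rw [← Finset.mul_sum, ← Finset.mul_sum, Finset.sum_sub_distrib,
    Finset.sum_const, nsmul_eq_mul] at hkeysum
  set E := ∑ e ∈ M, ∑ W : Finset V, wgt p W * indV L e W with hE
  have hE0 : 0 ≤ E :=
    Finset.sum_nonneg fun e _ => Finset.sum_nonneg fun W _ =>
      mul_nonneg (wgt_nonneg hp0' hp1.le W) (indV_nonneg _ _ _)
  have hMn : (M.card : ℝ) ≤ (Fintype.card V : ℝ) := by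
    have hinj : Set.InjOn Prod.fst (M : Set (V × U)) := by
      intro a ha b hb hab
      by_contra hne
      exact (hM a ha b hb hne).1 hab
    have h1 : (M.image Prod.fst).card = M.card := Finset.card_image_of_injOn hinj
    have h2 : (M.image Prod.fst).card ≤ Fintype.card V := by
      simpa using Finset.card_le_univ (M.image Prod.fst)
    exact_mod_cast h1 ▸ h2
  have hmaster : (1 - p) * ((M.card : ℝ) * p - E) ≤ p * (p * (Fintype.card V : ℝ)) := by
    calc (1 - p) * ((M.card : ℝ) * p - E)
        ≤ p * ∑ e ∈ M, ∑ W : Finset V, wgt p W * indU L e W := hkeysum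
      _ ≤ p * (p * (Fintype.card V : ℝ)) := mul_le_mul_of_nonneg_left hT hp0'
  rcases le_or_gt p (1/2) with hple | hpgt
  · have h6 : p * (p * (Fintype.card V : ℝ))
        ≤ (1 - p) * (2 * (p * (p * (Fintype.card V : ℝ)))) := by
      nlinarith [mul_nonneg (mul_nonneg hp0' hp0') hn0]
    have h7 : (1 - p) * ((M.card : ℝ) * p - E)
        ≤ (1 - p) * (2 * (p * (p * (Fintype.card V : ℝ)))) := hmaster.trans h6
    have h8 : (M.card : ℝ) * p - E ≤ 2 * (p * (p * (Fintype.card V : ℝ))) :=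
      (mul_le_mul_iff_right₀ h1p).mp h7
    linarith
  · have h9 : p * (M.card : ℝ) ≤ p * (Fintype.card V : ℝ) :=
      mul_le_mul_of_nonneg_left hMn hp0'
    have h10 : 0 ≤ p * (Fintype.card V : ℝ) * (2 * p - 1) :=
      mul_nonneg (mul_nonneg hp0' hn0) (by linarith)
    nlinarith [hE0]
end

section
/- Let T be a uniformly random ordering of m(K+1) elements consisting, for each of m edges, of K start-elements and one extend-element. Fix an edge e and define rank_start(e) as the minimal position of a start-element of e and rank_extend(e) as the position of the extend-element of e. For any D ≥ 1, conditioned on the event that rank_start(e') ≤ 8m log n for all edges e', we have Pr[rank_extend(e) ≤ D·rank_start(e)] ≤ 1/n² + 8D log n/(K+1). -/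
open Function

section core
variable {α β γ : Type*} [Fintype α] [Fintype β] [Fintype γ]

private lemma fiber_const (ι : γ ↪ α) (f g : γ ↪ β) :
    Nat.card {π : α ≃ β // ι.trans π.toEmbedding = f} =
      Nat.card {π : α ≃ β // ι.trans π.toEmbedding = g} := by
  classical
  obtain ⟨τ, hτ⟩ : ∃ τ : Equiv.Perm β, ∀ x, τ (f x) = g x := by
    refine ⟨Equiv.extendSubtype ((Equiv.ofInjective f f.injective).symm.trans
      (Equiv.ofInjective g g.injective)), fun x => ?_⟩
    have hmem : f x ∈ Set.range f := ⟨x, rfl⟩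
    rw [Equiv.extendSubtype_apply_of_mem _ _ hmem, Equiv.trans_apply]
    have h1 : (Equiv.ofInjective f f.injective).symm ⟨f x, hmem⟩ = x := by
      rw [Equiv.symm_apply_eq]
      exact Subtype.ext (by simp)
    rw [h1]
    simp
  refine Nat.card_congr (Equiv.subtypeEquiv (Equiv.equivCongr (Equiv.refl α) τ) fun π => ?_)
  constructor
  · rintro rfl
    ext x
    simpa [Equiv.equivCongr] using hτ x
  · intro h
    ext x
    have hx := DFunLike.congr_fun h x
    simp [Equiv.equivCongr] at hx
    exact τ.injective (hx.trans (hτ x).symm)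

private lemma core (ι : γ ↪ α) (S : Set (γ ↪ β)) :
    Nat.card {π : α ≃ β | ι.trans π.toEmbedding ∈ S} * Nat.card (γ ↪ β) =
      Nat.card S * Nat.card (α ≃ β) := by
  classical
  set Φ : (α ≃ β) → (γ ↪ β) := fun π => ι.trans π.toEmbedding with hΦ
  have hc : ∀ f g : γ ↪ β, (Finset.univ.filter fun π : α ≃ β => Φ π = f).card
      = (Finset.univ.filter fun π : α ≃ β => Φ π = g).card := by
    intro f g
    have := fiber_const ι f g
    simpa [Nat.card_eq_fintype_card, Fintype.card_subtype] using this
  have h2 : Fintype.card (α ≃ β)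
      = ∑ f : γ ↪ β, (Finset.univ.filter fun π : α ≃ β => Φ π = f).card := by
    rw [← Finset.card_univ]
    exact Finset.card_eq_sum_card_fiberwise (fun π _ => Finset.mem_univ (Φ π))
  have h1 : Nat.card {π : α ≃ β | Φ π ∈ S} =
      ∑ f ∈ S.toFinset, (Finset.univ.filter fun π : α ≃ β => Φ π = f).card := by
    rw [Nat.card_eq_fintype_card, Fintype.card_subtype,
      Finset.card_eq_sum_card_fiberwise (f := Φ) (t := S.toFinset)
        (fun π hπ => by simpa using (Finset.mem_filter.mp hπ).2)]
    refine Finset.sum_congr rfl fun f hf => ?_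
    rw [Finset.filter_filter]
    congr 1
    ext π
    simp only [Set.mem_toFinset] at hf
    simp only [Finset.mem_filter, Finset.mem_univ, true_and, Set.mem_setOf_eq]
    exact ⟨fun h => h.2, fun h => ⟨h ▸ hf, h⟩⟩
  have hterm : ∀ f : γ ↪ β,
      (Finset.univ.filter fun π : α ≃ β => Φ π = f).card * Nat.card (γ ↪ β)
        = Nat.card (α ≃ β) := by
    intro f
    rw [Nat.card_eq_fintype_card, Nat.card_eq_fintype_card, h2,
      Finset.sum_congr rfl (fun g _ => hc g f), Finset.sum_const, smul_eq_mul,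
      Finset.card_univ, mul_comm]
  rw [h1, Finset.sum_mul, Finset.sum_congr rfl (fun f _ => hterm f), Finset.sum_const,
    smul_eq_mul, Nat.card_eq_fintype_card (α := S), ← Set.toFinset_card]

end core


private lemma nat_term' (N t i : ℕ) : (N - t - i) * N ≤ (N - i) * (N - t) := by
  rcases le_or_gt (t + i) N with h | h
  · have h1 : t ≤ N := by omega
    have h2 : i ≤ N := by omega
    have h3 : i ≤ N - t := by omega
    zify [h1, h2, h3]
    nlinarith [mul_nonneg (Int.natCast_nonneg t) (Int.natCast_nonneg i)]
  · have h0 : N - t - i = 0 := by omega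
    simp [h0]

private lemma dF_le' (N t Kk : ℕ) :
    (N - t).descFactorial Kk * N ^ Kk ≤ N.descFactorial Kk * (N - t) ^ Kk := by
  rw [Nat.descFactorial_eq_prod_range, Nat.descFactorial_eq_prod_range]
  have hpow : ∀ a : ℕ, a ^ Kk = ∏ _i ∈ Finset.range Kk, a := fun a => by
    rw [Finset.prod_const, Finset.card_range]
  rw [hpow, hpow, ← Finset.prod_mul_distrib, ← Finset.prod_mul_distrib]
  exact Finset.prod_le_prod' fun i _ => nat_term' N t i


-- analytic ratio bound
private lemma ratio_bound' (n m K : ℕ) (hn : 2 ≤ n) (hm : 1 ≤ m) (hK : 1 ≤ K) :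
    ((m * (K + 1) - ⌊8 * (m : ℝ) * Real.log n⌋₊ : ℕ) : ℝ) ^ K ≤
      1 / (n : ℝ) ^ 2 * ((m * (K + 1) : ℕ) : ℝ) ^ K := by
  have hn0 : (0 : ℝ) < n := by positivity
  have hn1 : (1 : ℝ) ≤ n := by exact_mod_cast (by omega : 1 ≤ n)
  have hL0 : 0 ≤ Real.log n := Real.log_nonneg hn1
  have hLhalf : (1 : ℝ) / 2 ≤ Real.log n := by
    have h2 : Real.log 2 ≤ Real.log n := by
      apply Real.log_le_log (by norm_num)
      exact_mod_cast hn
    linarith [Real.log_two_gt_d9]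
  set t := ⌊8 * (m : ℝ) * Real.log n⌋₊ with ht
  set N := m * (K + 1) with hNdef
  have hNpos : 0 < N := by positivity
  have hNR : (0 : ℝ) < (N : ℕ) := by exact_mod_cast hNpos
  rcases le_or_gt N t with hle | hlt
  · rw [Nat.sub_eq_zero_of_le hle]
    rw [Nat.cast_zero, zero_pow (by omega : K ≠ 0)]
    positivity
  · have htN : (t : ℝ) ≤ N := by exact_mod_cast hlt.le
    rw [Nat.cast_sub hlt.le]
    have hmR : (1 : ℝ) ≤ m := by exact_mod_cast hm
    have hKR : (1 : ℝ) ≤ K := by exact_mod_cast hK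
    have hNR' : ((N : ℕ) : ℝ) = m * ((K : ℝ) + 1) := by push_cast [hNdef]; ring
    have ht1 : 8 * (m : ℝ) * Real.log n - 1 ≤ t := by
      have := Nat.lt_floor_add_one (8 * (m : ℝ) * Real.log n)
      linarith
    have ht0 : (0 : ℝ) ≤ t := by positivity
    -- key exponent bound
    have hKt : 2 * Real.log n ≤ (K : ℝ) * t / N := by
      rw [le_div_iff₀ hNR, hNR']
      nlinarith [mul_nonneg (sub_nonneg.mpr hKR) (mul_nonneg (by linarith : (0:ℝ) ≤ (m:ℝ)) hL0),
        mul_nonneg (sub_nonneg.mpr hmR) hL0,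
        mul_nonneg (mul_nonneg (by linarith : (0:ℝ) ≤ (K:ℝ)) (by linarith : (0:ℝ) ≤ (m:ℝ))) (by linarith : (0:ℝ) ≤ Real.log n - 1/2),
        mul_nonneg (sub_nonneg.mpr hKR) (mul_nonneg (by linarith : (0:ℝ) ≤ (m:ℝ)) hL0)]
    have hx : (0 : ℝ) ≤ (N : ℝ) - t := by linarith
    have h1 : ((N : ℝ) - t) / N ≤ Real.exp (-((t : ℝ) / N)) := by
      have := Real.add_one_le_exp (-((t : ℝ) / N))
      have heq : ((N : ℝ) - t) / N = 1 - (t : ℝ) / N := by field_simp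
      rw [heq]; linarith
    have h2 : (((N : ℝ) - t) / N) ^ K ≤ Real.exp (-((t : ℝ) / N)) ^ K :=
      pow_le_pow_left₀ (div_nonneg hx hNR.le) h1 K
    have h3 : Real.exp (-((t : ℝ) / N)) ^ K = Real.exp (-((K : ℝ) * t / N)) := by
      rw [← Real.exp_nat_mul]; ring_nf
    have h4 : Real.exp (-((K : ℝ) * t / N)) ≤ Real.exp (-(2 * Real.log n)) :=
      Real.exp_le_exp.mpr (by linarith)
    have h5 : Real.exp (-(2 * Real.log n)) = 1 / (n : ℝ) ^ 2 := by
      rw [Real.exp_neg, two_mul, Real.exp_add, Real.exp_log hn0]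
      rw [one_div]; congr 1; ring
    have h6 : (((N : ℝ) - t) / N) ^ K ≤ 1 / (n : ℝ) ^ 2 := by
      calc (((N : ℝ) - t) / N) ^ K ≤ Real.exp (-((t : ℝ) / N)) ^ K := h2
        _ = Real.exp (-((K : ℝ) * t / N)) := h3
        _ ≤ Real.exp (-(2 * Real.log n)) := h4
        _ = 1 / (n : ℝ) ^ 2 := h5
    have h7 : ((N : ℝ) - t) ^ K = (((N : ℝ) - t) / N) ^ K * (N : ℝ) ^ K := by
      rw [div_pow]; field_simp
    rw [h7]
    have hNpow : (0 : ℝ) ≤ ((N : ℕ) : ℝ) ^ K := by positivity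
    exact mul_le_mul_of_nonneg_right h6 hNpow


/-- Let `T` be a uniformly random ordering of `m(K+1)` elements: for each of `m ≤ n²`
edges, `K ≥ 1` start-elements (indices `j < K`) and one extend-element (index `K`).
Here an ordering is an equiv `π : Fin m × Fin (K+1) ≃ Fin (m(K+1))`, and ranks are
1-indexed positions.  For a fixed edge `e` and any `D ≥ 1`, using that
`rank_start(e') ≤ 8m·log n` for all `e'` fails with probability at most `1/n²`,
`Pr[rank_extend(e) ≤ D·rank_start(e)] ≤ 1/n² + 8D·log n/(K+1)`. -/
theorem stmt15 (n m K : ℕ) (hn : 2 ≤ n) (hm : 1 ≤ m) (hmn : m ≤ n ^ 2) (hK : 1 ≤ K)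
    (D : ℝ) (hD : 1 ≤ D) (e : Fin m) :
    (Set.ncard {π : (Fin m × Fin (K + 1)) ≃ Fin (m * (K + 1)) |
        (((π (e, Fin.last K) : ℕ) + 1 : ℕ) : ℝ) ≤
          D * ((sInf {i : ℕ | ∃ j : Fin K, i = (π (e, j.castSucc) : ℕ) + 1} : ℕ) : ℝ)} : ℝ) ≤
      (1 / (n : ℝ) ^ 2 + 8 * D * Real.log n / ((K : ℝ) + 1)) *
        (Nat.card ((Fin m × Fin (K + 1)) ≃ Fin (m * (K + 1))) : ℝ) := by
  classical
  have hn0 : (0 : ℝ) < n := by positivity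
  have hL0 : 0 ≤ Real.log n := Real.log_nonneg (by exact_mod_cast (by omega : 1 ≤ n))
  have hD0 : (0 : ℝ) ≤ D := by linarith
  set t := ⌊8 * (m : ℝ) * Real.log n⌋₊ with htdef
  have ht8 : (t : ℝ) ≤ 8 * (m : ℝ) * Real.log n := Nat.floor_le (by positivity)
  -- the two embeddings
  let ι₁ : Fin 1 ↪ Fin m × Fin (K + 1) :=
    ⟨fun _ => (e, Fin.last K), fun a b _ => Subsingleton.elim a b⟩
  let ι₂ : Fin K ↪ Fin m × Fin (K + 1) :=
    ⟨fun j => (e, j.castSucc), fun a b h => by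
      simpa [Prod.ext_iff, Fin.castSucc_inj] using h⟩
  -- target sets of embeddings
  let SC : Set (Fin 1 ↪ Fin (m * (K + 1))) := {f | ((f 0 : ℕ) + 1 : ℝ) ≤ D * t}
  let SB : Set (Fin K ↪ Fin (m * (K + 1))) := {f | ∀ j, t ≤ (f j : ℕ)}
  let B : Set ((Fin m × Fin (K + 1)) ≃ Fin (m * (K + 1))) :=
    {π | ι₂.trans π.toEmbedding ∈ SB}
  let C : Set ((Fin m × Fin (K + 1)) ≃ Fin (m * (K + 1))) :=
    {π | ι₁.trans π.toEmbedding ∈ SC}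
  -- cardinality of the whole space
  have hcard : Nat.card ((Fin m × Fin (K + 1)) ≃ Fin (m * (K + 1))) = Nat.factorial (m * (K + 1)) := by
    rw [Nat.card_eq_fintype_card, Fintype.card_equiv finProdFinEquiv]
    simp [Fintype.card_prod]
  -- A ⊆ B ∪ C
  have hsub : {π : (Fin m × Fin (K + 1)) ≃ Fin (m * (K + 1)) |
        (((π (e, Fin.last K) : ℕ) + 1 : ℕ) : ℝ) ≤
          D * ((sInf {i : ℕ | ∃ j : Fin K, i = (π (e, j.castSucc) : ℕ) + 1} : ℕ) : ℝ)} ⊆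
      B ∪ C := by
    intro π hπ
    simp only [Set.mem_setOf_eq] at hπ
    by_cases hB : ∀ j : Fin K, t ≤ ((π (e, j.castSucc) : Fin (m * (K + 1))) : ℕ)
    · exact Or.inl hB
    · right
      push_neg at hB
      obtain ⟨j, hj⟩ := hB
      have h1 : sInf {i : ℕ | ∃ j : Fin K, i = (π (e, j.castSucc) : ℕ) + 1} ≤
          (π (e, j.castSucc) : ℕ) + 1 := Nat.sInf_le ⟨j, rfl⟩
      have h2 : sInf {i : ℕ | ∃ j : Fin K, i = (π (e, j.castSucc) : ℕ) + 1} ≤ t := by omega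
      show ((((π (e, Fin.last K) : Fin (m * (K + 1))) : ℕ) + 1 : ℝ)) ≤ D * t
      have h3 : D * ((sInf {i : ℕ | ∃ j : Fin K, i = (π (e, j.castSucc) : ℕ) + 1} : ℕ) : ℝ) ≤
          D * t := by
        apply mul_le_mul_of_nonneg_left _ hD0
        exact_mod_cast h2
      push_cast at hπ
      linarith
  have hncard : ({π : (Fin m × Fin (K + 1)) ≃ Fin (m * (K + 1)) |
        (((π (e, Fin.last K) : ℕ) + 1 : ℕ) : ℝ) ≤
          D * ((sInf {i : ℕ | ∃ j : Fin K, i = (π (e, j.castSucc) : ℕ) + 1} : ℕ) : ℝ)}).ncard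
      ≤ B.ncard + C.ncard :=
    le_trans (Set.ncard_le_ncard hsub (Set.toFinite _)) (Set.ncard_union_le B C)
  -- counting for C
  have hcoreC := core ι₁ SC
  have hembC : Nat.card (Fin 1 ↪ Fin (m * (K + 1))) = m * (K + 1) := by
    rw [Nat.card_eq_fintype_card, Fintype.card_embedding_eq]
    simp
  have hSCle : Nat.card SC ≤ ⌊D * (t : ℝ)⌋₊ := by
    have hinj : Function.Injective (fun p : SC => (⟨(p.1 0 : ℕ), by
        have hp : ((p.1 0 : ℕ) + 1 : ℝ) ≤ D * t := p.2
        have h9 : ((p.1 0 : ℕ) + 1 : ℕ) ≤ ⌊D * (t : ℝ)⌋₊ := Nat.le_floor (by push_cast; linarith)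
        omega⟩ : Fin ⌊D * (t : ℝ)⌋₊)) := by
      intro p q hpq
      have hv : (p.1 0 : ℕ) = (q.1 0 : ℕ) := by
        have := congrArg Fin.val hpq
        simpa using this
      apply Subtype.ext
      apply DFunLike.ext
      intro x
      rw [Subsingleton.elim x 0]
      exact Fin.ext hv
    calc Nat.card SC ≤ Nat.card (Fin ⌊D * (t : ℝ)⌋₊) := Nat.card_le_card_of_injective _ hinj
      _ = ⌊D * (t : ℝ)⌋₊ := by simp
  -- counting for B
  have hcoreB := core ι₂ SB
  have hembB : Nat.card (Fin K ↪ Fin (m * (K + 1))) = Nat.descFactorial (m * (K + 1)) K := by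
    rw [Nat.card_eq_fintype_card, Fintype.card_embedding_eq]
    simp
  have ESB : SB ≃ (Fin K ↪ Fin (m * (K + 1) - t)) :=
    { toFun := fun p =>
        ⟨fun j => ⟨(p.1 j : ℕ) - t, by
            have h1 := (p.1 j).isLt
            have h2 : t ≤ (p.1 j : ℕ) := p.2 j
            omega⟩, by
          intro a b hab
          have h2a : t ≤ (p.1 a : ℕ) := p.2 a
          have h2b : t ≤ (p.1 b : ℕ) := p.2 b
          have hv : (p.1 a : ℕ) - t = (p.1 b : ℕ) - t := congrArg Fin.val hab
          exact p.1.injective (Fin.ext (by omega))⟩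
      invFun := fun g =>
        ⟨⟨fun j => ⟨(g j : ℕ) + t, by have := (g j).isLt; omega⟩, by
          intro a b hab
          have hv : (g a : ℕ) + t = (g b : ℕ) + t := congrArg Fin.val hab
          exact g.injective (Fin.ext (by omega))⟩,
          fun j => Nat.le_add_left t _⟩
      left_inv := fun p => by
        apply Subtype.ext
        apply DFunLike.ext
        intro j
        apply Fin.ext
        have h2 : t ≤ (p.1 j : ℕ) := p.2 j
        show (p.1 j : ℕ) - t + t = (p.1 j : ℕ)
        omega
      right_inv := fun g => by
        apply DFunLike.ext
        intro j
        apply Fin.ext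
        show (g j : ℕ) + t - t = (g j : ℕ)
        omega }
  have hSBcard : Nat.card SB = Nat.descFactorial (m * (K + 1) - t) K := by
    rw [Nat.card_congr ESB, Nat.card_eq_fintype_card, Fintype.card_embedding_eq]
    simp
  -- assemble
  rw [hcard]
  have hF0 : (0 : ℝ) < (Nat.factorial (m * (K + 1)) : ℝ) := by
    exact_mod_cast Nat.factorial_pos _
  have hNR : (0 : ℝ) < ((m * (K + 1) : ℕ) : ℝ) := by
    have : 0 < m * (K + 1) := by positivity
    exact_mod_cast this
  rw [Nat.card_coe_set_eq, hembC, hcard] at hcoreC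
  rw [Nat.card_coe_set_eq, hembB, hcard, hSBcard] at hcoreB
  have hCbound : ((C.ncard : ℕ) : ℝ) ≤ 8 * D * Real.log n / ((K : ℝ) + 1) *
      (Nat.factorial (m * (K + 1)) : ℝ) := by
    have hK1 : ((K : ℝ) + 1) ≠ 0 := by positivity
    rw [← mul_le_mul_iff_of_pos_right hNR]
    have h1 : ((C.ncard : ℕ) : ℝ) * ((m * (K + 1) : ℕ) : ℝ) =
        (Nat.card SC : ℝ) * (Nat.factorial (m * (K + 1)) : ℝ) := by exact_mod_cast hcoreC
    have hkey : (8 * D * Real.log n / ((K : ℝ) + 1) * (Nat.factorial (m * (K + 1)) : ℝ)) *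
        ((m * (K + 1) : ℕ) : ℝ) = D * (8 * (m : ℝ) * Real.log n) *
          (Nat.factorial (m * (K + 1)) : ℝ) := by
      push_cast
      field_simp
    rw [h1, hkey]
    have h2 : (Nat.card SC : ℝ) ≤ D * (8 * (m : ℝ) * Real.log n) := by
      have ha : (Nat.card SC : ℝ) ≤ (⌊D * (t : ℝ)⌋₊ : ℝ) := by exact_mod_cast hSCle
      have hb : ((⌊D * (t : ℝ)⌋₊ : ℕ) : ℝ) ≤ D * t := Nat.floor_le (by positivity)
      have hc : D * (t : ℝ) ≤ D * (8 * (m : ℝ) * Real.log n) :=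
        mul_le_mul_of_nonneg_left ht8 hD0
      linarith
    exact mul_le_mul_of_nonneg_right h2 hF0.le
  have hBbound : ((B.ncard : ℕ) : ℝ) ≤ 1 / (n : ℝ) ^ 2 *
      (Nat.factorial (m * (K + 1)) : ℝ) := by
    have hKN : K ≤ m * (K + 1) := le_trans (Nat.le_succ K)
      (Nat.le_mul_of_pos_left _ (by omega))
    have hdF0 : (0 : ℝ) < (Nat.descFactorial (m * (K + 1)) K : ℝ) := by
      have : Nat.descFactorial (m * (K + 1)) K ≠ 0 := fun h0 =>
        absurd (Nat.descFactorial_eq_zero_iff_lt.mp h0) (by omega)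
      exact_mod_cast Nat.pos_of_ne_zero this
    have hNpow : (0 : ℝ) < ((m * (K + 1) : ℕ) : ℝ) ^ K := by positivity
    rw [← mul_le_mul_iff_of_pos_right (mul_pos hdF0 hNpow)]
    have h1 : ((B.ncard : ℕ) : ℝ) * (Nat.descFactorial (m * (K + 1)) K : ℝ) =
        (Nat.descFactorial (m * (K + 1) - t) K : ℝ) *
          (Nat.factorial (m * (K + 1)) : ℝ) := by exact_mod_cast hcoreB
    have h6 : (Nat.descFactorial (m * (K + 1) - t) K : ℝ) * ((m * (K + 1) : ℕ) : ℝ) ^ K ≤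
        (Nat.descFactorial (m * (K + 1)) K : ℝ) * ((m * (K + 1) - t : ℕ) : ℝ) ^ K := by
      exact_mod_cast dF_le' (m * (K + 1)) t K
    have h7 := ratio_bound' n m K hn hm hK
    calc ((B.ncard : ℕ) : ℝ) * ((Nat.descFactorial (m * (K + 1)) K : ℝ) *
          ((m * (K + 1) : ℕ) : ℝ) ^ K)
        = (((B.ncard : ℕ) : ℝ) * (Nat.descFactorial (m * (K + 1)) K : ℝ)) *
            ((m * (K + 1) : ℕ) : ℝ) ^ K := by ring
      _ = ((Nat.descFactorial (m * (K + 1) - t) K : ℝ) * ((m * (K + 1) : ℕ) : ℝ) ^ K) *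
            (Nat.factorial (m * (K + 1)) : ℝ) := by rw [h1]; ring
      _ ≤ ((Nat.descFactorial (m * (K + 1)) K : ℝ) * ((m * (K + 1) - t : ℕ) : ℝ) ^ K) *
            (Nat.factorial (m * (K + 1)) : ℝ) := mul_le_mul_of_nonneg_right h6 hF0.le
      _ ≤ ((Nat.descFactorial (m * (K + 1)) K : ℝ) *
            (1 / (n : ℝ) ^ 2 * ((m * (K + 1) : ℕ) : ℝ) ^ K)) *
            (Nat.factorial (m * (K + 1)) : ℝ) := by
          apply mul_le_mul_of_nonneg_right _ hF0.le
          exact mul_le_mul_of_nonneg_left h7 hdF0.le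
      _ = 1 / (n : ℝ) ^ 2 * (Nat.factorial (m * (K + 1)) : ℝ) *
            ((Nat.descFactorial (m * (K + 1)) K : ℝ) * ((m * (K + 1) : ℕ) : ℝ) ^ K) := by ring
  have hA : (({π : (Fin m × Fin (K + 1)) ≃ Fin (m * (K + 1)) |
        (((π (e, Fin.last K) : ℕ) + 1 : ℕ) : ℝ) ≤
          D * ((sInf {i : ℕ | ∃ j : Fin K, i = (π (e, j.castSucc) : ℕ) + 1} : ℕ) : ℝ)}).ncard : ℝ)
      ≤ ((B.ncard : ℕ) : ℝ) + ((C.ncard : ℕ) : ℝ) := by exact_mod_cast hncard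
  have hrhs : (1 / (n : ℝ) ^ 2 + 8 * D * Real.log n / ((K : ℝ) + 1)) *
      (Nat.factorial (m * (K + 1)) : ℝ) =
      1 / (n : ℝ) ^ 2 * (Nat.factorial (m * (K + 1)) : ℝ) +
        8 * D * Real.log n / ((K : ℝ) + 1) * (Nat.factorial (m * (K + 1)) : ℝ) := by ring
  rw [hrhs]
  linarith
end
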